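/- arXiv:1409.0222 — 6 statements merged into one kernel-verified Lean document; each statement's English description precedes it below -/
import Mathlib

section
/- Let I = I⟨a_i,φ_i⟩ be a fragmented ideal and let Î be the fragmented ideal obtained from countably many copies of I. Then: (a) if I is nowhere tall, then Î is nowhere tall; (b) if I is somewhere tall, then Î is not gradually fragmented. -/
open Set Filter Cardinal

/-- `I` is an ideal on `ω`: contains all finite sets, downward closed, closed under unions. -/
def IsIdealOn (I : Set (Set ℕ)) : Prop :=
  (∀ x : Set ℕ, x.Finite → x ∈ I) ∧
  (∀ x y : Set ℕ, x ⊆ y → y ∈ I → x ∈ I) ∧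
  (∀ x y : Set ℕ, x ∈ I → y ∈ I → x ∪ y ∈ I)

/-- The pair `⟨A, B⟩` is `I`-orthogonal. -/
def IOrthogonal (I A B : Set (Set ℕ)) : Prop := ∀ s ∈ A, ∀ t ∈ B, s ∩ t ∈ I

/-- `C` separates the pair `⟨A, B⟩` with respect to `I`. -/
def ISeparates (I A B : Set (Set ℕ)) (C : Set ℕ) : Prop :=
  (∀ s ∈ A, s ∩ C ∈ I) ∧ (∀ t ∈ B, t \ C ∈ I)

/-- The pair `⟨A, B⟩` is an `I`-gap. -/
def IsIGap (I A B : Set (Set ℕ)) : Prop :=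
  IOrthogonal I A B ∧ ∀ C : Set ℕ, ¬ ISeparates I A B C

/-- There is an `I`-(ω, lam)-gap. -/
def HasOmegaGap (I : Set (Set ℕ)) (lam : Cardinal) : Prop :=
  ∃ A B : Set (Set ℕ), IsIGap I A B ∧ #A = ℵ₀ ∧ #B = lam

/-- `a` is a partition of `ω` into nonempty finite sets. -/
def IsPartitionFin (a : ℕ → Set ℕ) : Prop :=
  (∀ i, (a i).Nonempty) ∧ (∀ i, (a i).Finite) ∧
  (∀ i j, i ≠ j → Disjoint (a i) (a j)) ∧ (⋃ i, a i) = Set.univ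

/-- `φ` is a submeasure on the powerset of the set `s`. -/
def IsSubmeasureOn (s : Set ℕ) (φ : Set ℕ → ℝ) : Prop :=
  φ ∅ = 0 ∧ (∀ x, x ⊆ s → 0 ≤ φ x) ∧
  (∀ x y, x ⊆ y → y ⊆ s → φ x ≤ φ y) ∧
  (∀ x y, x ⊆ s → y ⊆ s → φ (x ∪ y) ≤ φ x + φ y)

/-- `I = I⟨a_i, φ_i⟩` is the fragmented ideal determined by the partition `a`
and the submeasures `φ`. -/
def IsFragmentation (I : Set (Set ℕ)) (a : ℕ → Set ℕ) (φ : ℕ → Set ℕ → ℝ) : Prop :=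
  IsPartitionFin a ∧ (∀ i, IsSubmeasureOn (a i) (φ i)) ∧
  ∀ x : Set ℕ, x ∈ I ↔ ∃ K : ℝ, ∀ i, φ i (x ∩ a i) ≤ K

/-- Gradual fragmentation of `⟨a_i, φ_i⟩`. -/
def GraduallyFragmented (a : ℕ → Set ℕ) (φ : ℕ → Set ℕ → ℝ) : Prop :=
  ∀ k : ℕ, ∃ m : ℕ, ∀ l : ℕ, ∀ᶠ i in atTop,
    ∀ B : Finset (Set ℕ), (∀ b ∈ B, b ⊆ a i) → B.card ≤ l →
      (∀ b ∈ B, φ i b ≤ (k : ℝ)) → φ i (⋃₀ (↑B : Set (Set ℕ))) ≤ (m : ℝ)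

/-- The restriction `I ↾ X` is tall. -/
def IsTallOn (I : Set (Set ℕ)) (X : Set ℕ) : Prop :=
  ∀ Y : Set ℕ, Y ⊆ X → Y.Infinite → ∃ Z, Z ⊆ Y ∧ Z.Infinite ∧ Z ∈ I

def IsTall (I : Set (Set ℕ)) : Prop := IsTallOn I Set.univ

def SomewhereTall (I : Set (Set ℕ)) : Prop := ∃ X : Set ℕ, X ∉ I ∧ IsTallOn I X

def NowhereTall (I : Set (Set ℕ)) : Prop := ¬ SomewhereTall I

/-- The unbounding number `𝔟`. -/
noncomputable def unboundingNumber : Cardinal :=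
  sInf {c | ∃ F : Set (ℕ → ℕ), #F = c ∧
    ∀ g : ℕ → ℕ, ∃ f ∈ F, ¬ ∀ᶠ i in atTop, f i ≤ g i}

/-- The additivity of the Lebesgue-null ideal, `add(N)`. -/
noncomputable def addNull : Cardinal :=
  sInf {c | ∃ F : Set (Set ℝ), #F = c ∧ (∀ s ∈ F, MeasureTheory.volume s = 0) ∧
    MeasureTheory.volume (⋃₀ F) ≠ 0}

/-!
(a) If `Î` is tall on an `Î`-positive set `X`, pick in every column `i` a copy `j i` on which
`X` is within `1` of its largest weight among the copies. Gluing the bijections `h i (j i)`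
transports the part of `X` lying in the chosen copies onto an `I`-positive set on which `I` is
tall.

(b) Every fragment of `I` reappears arbitrarily late among the fragments of `Î`, so gradual
fragmentation of `Î` bounds unions of small sets in every fragment of `I` uniformly. Then an
`I`-positive set contains points of arbitrarily large singleton weight, and a sequence of
such points is an infinite set none of whose infinite subsets lies in `I`.
-/

open Function

open Classical in
noncomputable def blockIndex (a : ℕ → Set ℕ) (z : ℕ) : ℕ :=
  if hz : ∃ n, z ∈ a n then hz.choose else 0

lemma blockIndex_eq {a : ℕ → Set ℕ} (ha : Pairwise (Disjoint on a)) {z n : ℕ} (hz : z ∈ a n) :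
    blockIndex a z = n := by
  have hex : ∃ n, z ∈ a n := ⟨n, hz⟩
  rw [blockIndex, dif_pos hex]
  by_contra hne
  exact (ha hne).ne_of_mem hex.choose_spec hz rfl

lemma IsPartitionFin.pairwise_disjoint {a : ℕ → Set ℕ} (ha : IsPartitionFin a) :
    Pairwise (Disjoint on a) :=
  ha.2.2.1

lemma IsPartitionFin.mem_blockIndex {a : ℕ → Set ℕ} (ha : IsPartitionFin a) (z : ℕ) :
    z ∈ a (blockIndex a z) := by
  have hex : ∃ n, z ∈ a n := mem_iUnion.1 (ha.2.2.2 ▸ mem_univ z)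
  rw [blockIndex, dif_pos hex]
  exact hex.choose_spec

lemma exists_eqOn_of_pairwise_disjoint {a : ℕ → Set ℕ} (ha : Pairwise (Disjoint on a))
    (f : ℕ → ℕ → ℕ) : ∃ g : ℕ → ℕ, ∀ n, EqOn g (f n) (a n) :=
  ⟨fun z => f (blockIndex a z) z, fun _ z hz => congrArg (f · z) (blockIndex_eq ha hz)⟩

lemma exists_forall_le_add_of_bddAbove {ι : Type*} [Nonempty ι] {v : ι → ℝ}
    (hv : BddAbove (range v)) {ε : ℝ} (hε : 0 < ε) : ∃ j, ∀ j', v j' ≤ v j + ε := by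
  obtain ⟨_, ⟨j, rfl⟩, hj⟩ :=
    exists_lt_of_lt_csSup (range_nonempty v) (sub_lt_self (sSup (range v)) hε)
  exact ⟨j, fun j' => by linarith [le_csSup hv (mem_range_self j')]⟩

section Selection

variable {ι α β : Type*} {a : ι → Set β} {b : ι → Set α} {g : α → β}

lemma injOn_iUnion_of_mapsTo (ha : Pairwise (Disjoint on a)) (hmaps : ∀ i, MapsTo g (b i) (a i))
    (hinj : ∀ i, InjOn g (b i)) : InjOn g (⋃ i, b i) := by
  intro z₁ hz₁ z₂ hz₂ heq
  obtain ⟨i₁, hi₁⟩ := mem_iUnion.1 hz₁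
  obtain ⟨i₂, hi₂⟩ := mem_iUnion.1 hz₂
  obtain rfl : i₁ = i₂ := by
    by_contra hne
    exact (ha hne).ne_of_mem (hmaps i₁ hi₁) (hmaps i₂ hi₂) heq
  exact hinj i₁ hi₁ hi₂ heq

lemma image_inter_eq_of_mapsTo (ha : Pairwise (Disjoint on a))
    (hmaps : ∀ i, MapsTo g (b i) (a i)) {Z : Set α} (hZ : Z ⊆ ⋃ i, b i) (i : ι) :
    g '' Z ∩ a i = g '' (Z ∩ b i) := by
  refine Subset.antisymm ?_ fun _ ⟨z, ⟨hzZ, hzb⟩, hgz⟩ => ⟨⟨z, hzZ, hgz⟩, hgz ▸ hmaps i hzb⟩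
  rintro _ ⟨⟨z, hzZ, rfl⟩, hga⟩
  obtain ⟨i', hi'⟩ := mem_iUnion.1 (hZ hzZ)
  obtain rfl : i' = i := by
    by_contra hne
    exact (ha hne).ne_of_mem (hmaps i' hi') hga rfl
  exact ⟨z, ⟨hzZ, hi'⟩, rfl⟩

end Selection

lemma IsTallOn.mono {I : Set (Set ℕ)} {X Y : Set ℕ} (hX : IsTallOn I X) (hYX : Y ⊆ X) :
    IsTallOn I Y :=
  fun Z hZY => hX Z (hZY.trans hYX)

lemma IsTallOn.image {I J : Set (Set ℕ)} {X : Set ℕ} {g : ℕ → ℕ} (hX : IsTallOn J X)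
    (hg : InjOn g X) (hJI : ∀ Z ⊆ X, Z ∈ J → g '' Z ∈ I) : IsTallOn I (g '' X) := by
  intro Y hY hYinf
  have hpre : g '' (X ∩ g ⁻¹' Y) = Y := by
    rw [image_inter_preimage, inter_eq_right.2 hY]
  have hpre_inf : (X ∩ g ⁻¹' Y).Infinite := fun hfin => hYinf (hpre ▸ hfin.image g)
  obtain ⟨Z, hZ, hZinf, hZJ⟩ := hX _ inter_subset_left hpre_inf
  exact ⟨g '' Z, hpre ▸ image_mono hZ, hZinf.image (hg.mono (hZ.trans inter_subset_left)),
    hJI Z (hZ.trans inter_subset_left) hZJ⟩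

def UniformlyGraduallyFragmented (a : ℕ → Set ℕ) (φ : ℕ → Set ℕ → ℝ) : Prop :=
  ∀ k : ℕ, ∃ m : ℕ, ∀ i (B : Finset (Set ℕ)), (∀ b ∈ B, b ⊆ a i) →
    (∀ b ∈ B, φ i b ≤ (k : ℝ)) → φ i (⋃₀ (↑B : Set (Set ℕ))) ≤ (m : ℝ)

lemma GraduallyFragmented.uniformlyGraduallyFragmented_of_copies {a a' : ℕ → Set ℕ}
    {φ φ' : ℕ → Set ℕ → ℝ} (hgrad : GraduallyFragmented a' φ')
    (hcopy : ∀ i N, ∃ n ≥ N, ∃ g : ℕ → ℕ, BijOn g (a' n) (a i) ∧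
      ∀ x ⊆ a' n, φ' n x = φ i (g '' x)) :
    UniformlyGraduallyFragmented a φ := by
  intro k
  obtain ⟨m, hm⟩ := hgrad k
  refine ⟨m, fun i B hBa hBk => ?_⟩
  obtain ⟨N, hN⟩ := eventually_atTop.1 (hm B.card)
  obtain ⟨n, hnN, g, hg, hφ⟩ := hcopy i N
  set pull : Set ℕ → Set ℕ := fun b => a' n ∩ g ⁻¹' b
  have hpull : ∀ b ∈ B, g '' pull b = b := fun b hb => by
    rw [image_inter_preimage, hg.image_eq, inter_eq_right.2 (hBa b hb)]
  have hpull_sub : ∀ b ∈ B.image pull, b ⊆ a' n := by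
    simp only [Finset.mem_image]
    rintro _ ⟨b, -, rfl⟩
    exact inter_subset_left
  have hunion : g '' ⋃₀ ↑(B.image pull) = ⋃₀ (↑B : Set (Set ℕ)) := by
    rw [Finset.coe_image, sUnion_image, image_iUnion₂, sUnion_eq_biUnion]
    exact iUnion₂_congr hpull
  rw [← hunion, ← hφ _ (sUnion_subset hpull_sub)]
  refine hN n hnN _ hpull_sub Finset.card_image_le ?_
  simp only [Finset.mem_image]
  rintro _ ⟨b, hb, rfl⟩
  rw [hφ _ inter_subset_left, hpull b hb]
  exact hBk b hb

section Fragmented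

variable {I : Set (Set ℕ)} {a : ℕ → Set ℕ} {φ : ℕ → Set ℕ → ℝ}

lemma IsFragmentation.exists_lt_singleton_of_notMem (hfrag : IsFragmentation I a φ)
    (hunif : UniformlyGraduallyFragmented a φ) {X : Set ℕ} (hX : X ∉ I) (k : ℕ) :
    ∃ y ∈ X, (k : ℝ) < φ (blockIndex a y) {y} := by
  obtain ⟨m, hm⟩ := hunif k
  by_contra! hsmall
  refine hX ((hfrag.2.2 X).2 ⟨m, fun i => ?_⟩)
  have hXa : (X ∩ a i).Finite := (hfrag.1.2.1 i).subset inter_subset_right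
  have hunion : ⋃₀ ↑(hXa.toFinset.image fun y => ({y} : Set ℕ)) = X ∩ a i := by
    ext; simp
  rw [← hunion]
  refine hm i _ ?_ ?_ <;> simp only [Finset.mem_image, Finite.mem_toFinset] <;>
    rintro _ ⟨y, hy, rfl⟩
  · exact singleton_subset_iff.2 hy.2
  · simpa [blockIndex_eq hfrag.1.pairwise_disjoint hy.2] using hsmall y hy.1

lemma IsFragmentation.not_isTallOn_of_unbounded (hfrag : IsFragmentation I a φ) {X : Set ℕ}
    (hX : ∀ k : ℕ, ∃ y ∈ X, (k : ℝ) < φ (blockIndex a y) {y}) : ¬ IsTallOn I X := by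
  choose x hxX hx using hX
  -- `x t` has weight above `t`, so only finitely many `t` land in a set of bounded weight.
  have hfin : ∀ (S : Set ℕ) (K : ℝ), (∀ y ∈ S, φ (blockIndex a y) {y} ≤ K) →
      (x ⁻¹' S).Finite := fun S K hK =>
    (finite_Iio ⌈K⌉₊).subset fun t ht =>
      Nat.cast_lt.1 (((hx t).trans_le (hK _ ht)).trans_le (Nat.le_ceil K))
  have hrange : (range x).Infinite := fun hfin' => infinite_univ <| by
    rw [← preimage_range x]
    exact hfin'.preimage' fun y _ => hfin {y} _ fun _ hy => by rw [mem_singleton_iff.1 hy]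
  intro htall
  obtain ⟨Z, hZx, hZinf, hZI⟩ := htall (range x) (range_subset_iff.2 hxX) hrange
  obtain ⟨K, hK⟩ := (hfrag.2.2 Z).1 hZI
  refine hZinf (finite_of_finite_preimage (hfin Z K fun y hy => ?_) hZx)
  have hy' : y ∈ Z ∩ a (blockIndex a y) := ⟨hy, hfrag.1.mem_blockIndex y⟩
  exact ((hfrag.2.1 _).2.2.1 _ _ (singleton_subset_iff.2 hy') inter_subset_right).trans
    (hK _)

end Fragmented

section Copies

variable {I Ihat : Set (Set ℕ)} {a : ℕ → Set ℕ} {φ : ℕ → Set ℕ → ℝ} {a2 : ℕ → ℕ → Set ℕ}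
  {h : ℕ → ℕ → ℕ → ℕ}

lemma mem_copies_iff (hfrag2 : IsFragmentation Ihat
      (fun n => a2 (Nat.unpair n).1 (Nat.unpair n).2)
      (fun n x => φ (Nat.unpair n).1 ((h (Nat.unpair n).1 (Nat.unpair n).2) '' x)))
    (Z : Set ℕ) : Z ∈ Ihat ↔ ∃ K : ℝ, ∀ i j, φ i (h i j '' (Z ∩ a2 i j)) ≤ K := by
  rw [hfrag2.2.2]
  refine ⟨fun ⟨K, hK⟩ => ⟨K, fun i j => ?_⟩, fun ⟨K, hK⟩ => ⟨K, fun n => hK _ _⟩⟩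
  simpa only [Nat.unpair_pair] using hK (Nat.pair i j)

lemma somewhereTall_of_somewhereTall_copies (hfrag : IsFragmentation I a φ)
    (hbij : ∀ i j, BijOn (h i j) (a2 i j) (a i))
    (hfrag2 : IsFragmentation Ihat
      (fun n => a2 (Nat.unpair n).1 (Nat.unpair n).2)
      (fun n x => φ (Nat.unpair n).1 ((h (Nat.unpair n).1 (Nat.unpair n).2) '' x)))
    (hIhat : SomewhereTall Ihat) : SomewhereTall I := by
  obtain ⟨X, hXpos, hXtall⟩ := hIhat
  have hdisj := hfrag.1.pairwise_disjoint
  obtain ⟨g, hg⟩ := exists_eqOn_of_pairwise_disjoint hfrag2.1.pairwise_disjoint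
    fun n => h (Nat.unpair n).1 (Nat.unpair n).2
  have hgh : ∀ i j, EqOn g (h i j) (a2 i j) := fun i j => by
    simpa only [Nat.unpair_pair] using hg (Nat.pair i j)
  have hbdd : ∀ i, BddAbove (range fun j => φ i (h i j '' (X ∩ a2 i j))) := fun i =>
    ⟨φ i (a i), forall_mem_range.2 fun j => (hfrag.2.1 i).2.2.1 _ _
      ((image_mono inter_subset_right).trans (hbij i j).mapsTo.image_subset) subset_rfl⟩
  choose j hj using fun i => exists_forall_le_add_of_bddAbove (hbdd i) one_pos
  have hmaps : ∀ i, MapsTo g (a2 i (j i)) (a i) := fun i =>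
    (hbij i (j i)).mapsTo.congr (hgh i (j i)).symm
  have hsection : ∀ Z ⊆ ⋃ i, a2 i (j i), ∀ i,
      g '' Z ∩ a i = h i (j i) '' (Z ∩ a2 i (j i)) := fun Z hZ i => by
    rw [image_inter_eq_of_mapsTo hdisj hmaps hZ,
      image_congr fun z hz => hgh i (j i) (mem_of_mem_inter_right hz)]
  set X₀ := X ∩ ⋃ i, a2 i (j i)
  have hX₀ : X₀ ⊆ ⋃ i, a2 i (j i) := inter_subset_right
  refine ⟨g '' X₀, fun hX₀I => hXpos ?_, (hXtall.mono inter_subset_left).image ?_ ?_⟩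
  · obtain ⟨K, hK⟩ := (hfrag.2.2 _).1 hX₀I
    refine (mem_copies_iff hfrag2 X).2 ⟨K + 1, fun i j' => ?_⟩
    have hchosen : X₀ ∩ a2 i (j i) = X ∩ a2 i (j i) := by
      rw [inter_assoc, inter_eq_right.2 (subset_iUnion (fun i => a2 i (j i)) i)]
    calc φ i (h i j' '' (X ∩ a2 i j')) ≤ φ i (h i (j i) '' (X ∩ a2 i (j i))) + 1 := hj i j'
      _ = φ i (g '' X₀ ∩ a i) + 1 := by rw [hsection X₀ hX₀, hchosen]
      _ ≤ K + 1 := by linarith [hK i]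
  · exact (injOn_iUnion_of_mapsTo hdisj hmaps fun i =>
      (hbij i (j i)).injOn.congr (hgh i (j i)).symm).mono hX₀
  · intro Z hZ hZI
    obtain ⟨K, hK⟩ := (mem_copies_iff hfrag2 Z).1 hZI
    exact (hfrag.2.2 _).2 ⟨K, fun i => hsection Z (hZ.trans hX₀) i ▸ hK i (j i)⟩

end Copies

theorem copies_of_fragmented_ideal_general
    (a : ℕ → Set ℕ) (φ : ℕ → Set ℕ → ℝ) (I : Set (Set ℕ))
    (hfrag : IsFragmentation I a φ)
    (a2 : ℕ → ℕ → Set ℕ) (h : ℕ → ℕ → ℕ → ℕ)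
    (hbij : ∀ i j, Set.BijOn (h i j) (a2 i j) (a i))
    (Ihat : Set (Set ℕ))
    (hfrag2 : IsFragmentation Ihat
      (fun n => a2 (Nat.unpair n).1 (Nat.unpair n).2)
      (fun n x => φ (Nat.unpair n).1 ((h (Nat.unpair n).1 (Nat.unpair n).2) '' x))) :
    (NowhereTall I → NowhereTall Ihat) ∧
    (SomewhereTall I →
      ¬ GraduallyFragmented (fun n => a2 (Nat.unpair n).1 (Nat.unpair n).2)
        (fun n x => φ (Nat.unpair n).1 ((h (Nat.unpair n).1 (Nat.unpair n).2) '' x))) := by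
  refine ⟨fun hI hIhat => hI (somewhereTall_of_somewhereTall_copies hfrag hbij hfrag2 hIhat), ?_⟩
  rintro ⟨X, hXpos, hXtall⟩ hgrad
  have hunif : UniformlyGraduallyFragmented a φ :=
    hgrad.uniformlyGraduallyFragmented_of_copies fun i N =>
      ⟨Nat.pair i N, Nat.right_le_pair i N, h i N, by simpa using hbij i N, fun x _ => by simp⟩
  exact hfrag.not_isTallOn_of_unbounded (hfrag.exists_lt_singleton_of_notMem hunif hXpos) hXtall

/-- Let `I = I⟨a_i, φ_i⟩` be a fragmented ideal and let `Î` be the fragmented ideal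
obtained from countably many copies of `I`: it is determined by a partition
`{a_{i,j} : i,j < ω}` of `ω` into nonempty finite sets (enumerated via `Nat.unpair`)
with `|a_{i,j}| = |a_i|`, where `h_{i,j}` is the (unique) strictly increasing bijection
from `a_{i,j}` onto `a_i` and `φ_{i,j}(x) = φ_i(h_{i,j}[x])`.
Then (a) if `I` is nowhere tall, so is `Î`; and (b) if `I` is somewhere tall, then `Î`
is not gradually fragmented. -/
theorem copies_of_fragmented_ideal
    (a : ℕ → Set ℕ) (φ : ℕ → Set ℕ → ℝ) (I : Set (Set ℕ))
    (hfrag : IsFragmentation I a φ)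
    (a2 : ℕ → ℕ → Set ℕ) (h : ℕ → ℕ → ℕ → ℕ)
    (hbij : ∀ i j, Set.BijOn (h i j) (a2 i j) (a i))
    (hmono : ∀ i j, StrictMonoOn (h i j) (a2 i j))
    (hcard : ∀ i j, (a2 i j).ncard = (a i).ncard)
    (Ihat : Set (Set ℕ))
    (hfrag2 : IsFragmentation Ihat
      (fun n => a2 (Nat.unpair n).1 (Nat.unpair n).2)
      (fun n x => φ (Nat.unpair n).1 ((h (Nat.unpair n).1 (Nat.unpair n).2) '' x))) :
    (NowhereTall I → NowhereTall Ihat) ∧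
    (SomewhereTall I →
      ¬ GraduallyFragmented (fun n => a2 (Nat.unpair n).1 (Nat.unpair n).2)
        (fun n x => φ (Nat.unpair n).1 ((h (Nat.unpair n).1 (Nat.unpair n).2) '' x))) :=
  copies_of_fragmented_ideal_general a φ I hfrag a2 h hbij Ihat hfrag2
end

section
/- Let b, h ∈ ω^ω converge to infinity with b ≥ 2 and h non-decreasing. Let c ∈ ω^ω with c ≥ 2 converging to infinity and h ≤* c, and let P = {a_i : i < ω} be a partition of ω into nonempty finite sets with |a_i| ≤ log₂ b(i) for all but finitely many i. Then min{𝔟_Loc(b,h), 𝔟} ≤ 𝔟(I_c(P)); equivalently, every I_c(P)-orthogonal pair ⟨𝒜,ℬ⟩ with 𝒜 a countable partition of ω and |ℬ| < min{𝔟_Loc(b,h), 𝔟} is separated by some C ⊆ ω. -/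
open Set Filter Cardinal

/-- The localization cardinal `𝔟_Loc(b,h)`: the least size of a family
`F ⊆ ∏_i b(i)` that cannot be `∈*`-covered by a single slalom in `S(b,h)`. -/
noncomputable def bLoc (b h : ℕ → ℕ) : Cardinal :=
  sInf {c | ∃ F : Set (ℕ → ℕ), #F = c ∧ (∀ x ∈ F, ∀ i, x i < b i) ∧
    ∀ ψ : ℕ → Finset ℕ, (∀ i, ∀ m ∈ ψ i, m < b i) → (∀ i, (ψ i).card ≤ h i) →
      ∃ x ∈ F, ¬ ∀ᶠ i in atTop, x i ∈ ψ i}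

/-- The fragmented ideal `I_c(P)` for `c ≥ 2` and the partition `P = {a_i}`, where
`φ_i(x)` is the least `k` with `|x| < c(i)^k`: `x ∈ I_c(P)` iff the `φ_i(x ∩ a_i)` are
bounded, i.e. iff there is `K` with `|x ∩ a_i| < c(i)^K` for all `i`. -/
def Icp (c : ℕ → ℕ) (a : ℕ → Set ℕ) : Set (Set ℕ) :=
  {x | ∃ K : ℕ, ∀ i, (x ∩ a i).ncard < c i ^ K}

/-! Fix a countable partition `A` and a family `B` of fewer than `min{𝔟_Loc(b,h), 𝔟}` sets,
each `I_c(P)`-orthogonal to every `A n`. For `s ∈ B` let `f_s(n)` be an exponent with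
`|A n ∩ s ∩ a_i| < c(i)^{f_s(n)}` for all `i`; fewer than `𝔟` functions are dominated by a single
`g`. Since `2^{|a_i|} ≤ b(i)`, the traces `s ∩ a_i` can be coded below `b(i)`, and fewer than
`𝔟_Loc(b,h)` of these codes are localized by one slalom, i.e. by a choice of at most
`h(i) ≤ c(i)` candidates `u` for `s ∩ a_i`. The separator `C` collects the pieces `A n ∩ u ∩ a_i`
of size below `c(i)^{g(n)}`: then `|A n ∩ C ∩ a_i| ≤ h(i) c(i)^{g(n)} ≤ c(i)^{g(n)+1}`, while
`s ∖ C` is, up to finitely many blocks, covered by the finitely many `A n` on which `f_s`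
exceeds `g`. An arbitrary countable `𝒜` reduces to a partition by disjointification. -/

theorem IsIdealOn.biUnion_mem {I : Set (Set ℕ)} (hI : IsIdealOn I) {ι : Type*} (S : Finset ι)
    {f : ι → Set ℕ} (hf : ∀ i ∈ S, f i ∈ I) : ⋃ i ∈ S, f i ∈ I := by
  classical
  induction S using Finset.induction_on with
  | empty => simpa using hI.1 ∅ finite_empty
  | insert j S _ ih =>
    rw [Finset.set_biUnion_insert]
    exact hI.2.2 _ _ (hf j (Finset.mem_insert_self j S))
      (ih fun i hi => hf i (Finset.mem_insert_of_mem hi))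

def PartitionPairsSeparated (I : Set (Set ℕ)) (κ : Cardinal) : Prop :=
  ∀ A : ℕ → Set ℕ, (∀ i j, i ≠ j → Disjoint (A i) (A j)) → (⋃ i, A i) = Set.univ →
    ∀ B : Set (Set ℕ), #B < κ → (∀ i : ℕ, ∀ s ∈ B, A i ∩ s ∈ I) →
      ∃ C : Set ℕ, (∀ i : ℕ, A i ∩ C ∈ I) ∧ ∀ s ∈ B, s \ C ∈ I

theorem IsIdealOn.le_of_hasOmegaGap {I : Set (Set ℕ)} (hI : IsIdealOn I) {κ lam : Cardinal}
    (hsep : PartitionPairsSeparated I κ) (hgap : HasOmegaGap I lam) : κ ≤ lam := by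
  obtain ⟨𝒜, ℬ, ⟨horth, hnosep⟩, h𝒜, rfl⟩ := hgap
  by_contra hlt
  obtain ⟨e⟩ : Nonempty (ℕ ≃ 𝒜) := by rw [← Cardinal.eq, mk_nat, h𝒜]
  -- adding `{n}` to the `n`-th member makes the disjointified family cover `ω`
  set A := disjointed fun n => (e n : Set ℕ) ∪ {n}
  have hA_cover : ⋃ n, A n = Set.univ := by
    rw [iUnion_disjointed]
    exact eq_univ_of_forall fun n => mem_iUnion.2 ⟨n, Or.inr rfl⟩
  have hA_orth : ∀ n, ∀ t ∈ ℬ, A n ∩ t ∈ I := by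
    intro n t ht
    have hsub : A n ∩ t ⊆ ((e n : Set ℕ) ∩ t) ∪ {n} := by
      rintro y ⟨hyA, hyt⟩
      rcases disjointed_subset _ n hyA with hye | hyn
      · exact Or.inl ⟨hye, hyt⟩
      · exact Or.inr hyn
    exact hI.2.1 _ _ hsub (hI.2.2 _ _ (horth _ (e n).2 t ht) (hI.1 _ (finite_singleton n)))
  obtain ⟨C, hAC, hBC⟩ := hsep A (disjoint_disjointed _) hA_cover ℬ (not_le.1 hlt) hA_orth
  refine hnosep C ⟨fun s hs => ?_, hBC⟩
  obtain ⟨n, rfl⟩ : ∃ n, (e n : Set ℕ) = s := ⟨e.symm ⟨s, hs⟩, by simp⟩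
  have hcover : (e n : Set ℕ) ⊆ ⋃ k ∈ Finset.range (n + 1), A k := by
    rw [biUnion_range_succ_disjointed]
    exact subset_union_left.trans (le_partialSups (fun k => (e k : Set ℕ) ∪ {k}) n)
  refine hI.2.1 _ _ ?_ (hI.biUnion_mem (Finset.range (n + 1)) fun k _ => hAC k)
  rw [← iUnion₂_inter]
  exact inter_subset_inter_left C hcover

theorem exists_eventually_le_of_mk_lt_unboundingNumber {α : Type} (F : α → ℕ → ℕ)
    (hα : #α < unboundingNumber) : ∃ g : ℕ → ℕ, ∀ x, ∀ᶠ n in atTop, F x n ≤ g n := by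
  by_contra hF
  simp only [not_exists, not_forall] at hF
  rw [unboundingNumber] at hα
  refine hα.not_ge ((csInf_le' ?_).trans (mk_range_le (f := F)))
  refine ⟨range F, rfl, fun g => ?_⟩
  obtain ⟨x, hx⟩ := hF g
  exact ⟨F x, mem_range_self x, hx⟩

theorem exists_slalom_of_mk_lt_bLoc {b h : ℕ → ℕ} {α : Type} (hα : #α < bLoc b h)
    (x : α → ℕ → ℕ) (hx : ∀ y i, x y i < b i) :
    ∃ ψ : ℕ → Finset ℕ, (∀ i, (ψ i).card ≤ h i) ∧ ∀ y, ∀ᶠ i in atTop, x y i ∈ ψ i := by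
  by_contra hψ
  simp only [not_exists, not_and, not_forall] at hψ
  rw [bLoc] at hα
  refine hα.not_ge ((csInf_le' ?_).trans (mk_range_le (f := x)))
  refine ⟨range x, rfl, ?_, fun ψ _ hψh => ?_⟩
  · rintro _ ⟨y, rfl⟩
    exact hx y
  · obtain ⟨y, hy⟩ := hψ ψ hψh
    exact ⟨x y, mem_range_self y, hy⟩

theorem exists_powerset_slalom_of_mk_lt_bLoc {b h : ℕ → ℕ} {α : Type} (hα : #α < bLoc b h)
    (hb : ∀ i, 0 < b i) {a : ℕ → Set ℕ} (hfin : ∀ i, (a i).Finite)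
    (hsize : ∀ᶠ i in atTop, 2 ^ (a i).ncard ≤ b i) (x : α → ℕ → Set ℕ)
    (hx : ∀ y i, x y i ⊆ a i) :
    ∃ Φ : ℕ → Finset (Set ℕ), (∀ i, (Φ i).card ≤ h i) ∧ ∀ y, ∀ᶠ i in atTop, x y i ∈ Φ i := by
  classical
  have hcode : ∀ i, ∃ code : Set ℕ → ℕ, 2 ^ (a i).ncard ≤ b i →
      𝒫 a i ⊆ code ⁻¹' ↑(Finset.range (b i)) ∧ InjOn code (𝒫 a i) := by
    intro i
    by_cases hi : 2 ^ (a i).ncard ≤ b i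
    · refine (hfin i).powerset.exists_injOn_of_encard_le ?_ |>.imp fun _ hcode _ => hcode
      rw [← (hfin i).powerset.cast_ncard_eq, ncard_powerset _ (hfin i),
        encard_coe_eq_coe_finsetCard, Finset.card_range]
      exact_mod_cast hi
    · exact ⟨fun _ => 0, fun hi' => absurd hi' hi⟩
  choose code hcode using hcode
  let x' : α → ℕ → ℕ := fun y i => if 2 ^ (a i).ncard ≤ b i then code i (x y i) else 0
  have hx' : ∀ y i, x' y i < b i := by
    intro y i
    by_cases hi : 2 ^ (a i).ncard ≤ b i
    · simpa [x', hi] using (hcode i hi).1 (hx y i)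
    · simpa [x', hi] using hb i
  obtain ⟨ψ, hψh, hψ⟩ := exists_slalom_of_mk_lt_bLoc hα x' hx'
  refine ⟨fun i => (ψ i).image (Function.invFunOn (code i) (𝒫 a i)),
    fun i => Finset.card_image_le.trans (hψh i), fun y => ?_⟩
  filter_upwards [hsize, hψ y] with i hi hyi
  rw [Finset.mem_image]
  refine ⟨x' y i, hyi, ?_⟩
  simp only [x', if_pos hi]
  exact (hcode i hi).2.leftInvOn_invFunOn (hx y i)

section Icp

variable {c : ℕ → ℕ} {a : ℕ → Set ℕ}

theorem finite_mem_Icp (hc2 : ∀ i, 2 ≤ c i) {x : Set ℕ} (hx : x.Finite) : x ∈ Icp c a :=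
  ⟨x.ncard, fun i =>
    (ncard_le_ncard inter_subset_left hx).trans_lt (Nat.lt_pow_self (hc2 i))⟩

theorem Icp_mono (hfin : ∀ i, (a i).Finite) {x y : Set ℕ} (hxy : x ⊆ y) (hy : y ∈ Icp c a) :
    x ∈ Icp c a := by
  obtain ⟨K, hK⟩ := hy
  exact ⟨K, fun i =>
    (ncard_le_ncard (inter_subset_inter_left _ hxy) ((hfin i).inter_of_right _)).trans_lt (hK i)⟩

theorem union_mem_Icp (hc2 : ∀ i, 2 ≤ c i) {x y : Set ℕ} (hx : x ∈ Icp c a)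
    (hy : y ∈ Icp c a) : x ∪ y ∈ Icp c a := by
  obtain ⟨K, hK⟩ := hx
  obtain ⟨L, hL⟩ := hy
  refine ⟨max K L + 1, fun i => ?_⟩
  have hc1 : 1 ≤ c i := (hc2 i).trans' one_le_two
  calc ((x ∪ y) ∩ a i).ncard
      ≤ (x ∩ a i).ncard + (y ∩ a i).ncard := by
        rw [union_inter_distrib_right]
        exact ncard_union_le _ _
    _ < c i ^ max K L + c i ^ max K L :=
        add_lt_add_of_lt_of_le ((hK i).trans_le (Nat.pow_le_pow_right hc1 (le_max_left K L)))
          ((hL i).le.trans (Nat.pow_le_pow_right hc1 (le_max_right K L)))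
    _ ≤ c i ^ (max K L + 1) := by
        rw [pow_succ, ← two_mul, mul_comm]
        exact Nat.mul_le_mul_left _ (hc2 i)

theorem isIdealOn_Icp (hc2 : ∀ i, 2 ≤ c i) (hfin : ∀ i, (a i).Finite) : IsIdealOn (Icp c a) :=
  ⟨fun _ => finite_mem_Icp hc2, fun _ _ => Icp_mono hfin, fun _ _ => union_mem_Icp hc2⟩

theorem mem_Icp_of_eventually_le (hc2 : ∀ i, 2 ≤ c i) (hfin : ∀ i, (a i).Finite) {x : Set ℕ}
    {K : ℕ} (hx : ∀ᶠ i in atTop, (x ∩ a i).ncard ≤ c i ^ K) : x ∈ Icp c a := by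
  obtain ⟨i₀, hi₀⟩ := eventually_atTop.1 hx
  refine ⟨K + 1 + ∑ j ∈ Finset.range i₀, (a j).ncard, fun i => ?_⟩
  have hc1 : 1 ≤ c i := (hc2 i).trans' one_le_two
  rcases le_or_gt i₀ i with hi | hi
  · calc (x ∩ a i).ncard ≤ c i ^ K := hi₀ i hi
      _ < c i ^ (K + 1) := Nat.pow_lt_pow_right (hc2 i) K.lt_succ_self
      _ ≤ _ := Nat.pow_le_pow_right hc1 (Nat.le_add_right _ _)
  · calc (x ∩ a i).ncard ≤ (a i).ncard := ncard_le_ncard inter_subset_right (hfin i)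
      _ < c i ^ (a i).ncard := Nat.lt_pow_self (hc2 i)
      _ ≤ _ := Nat.pow_le_pow_right hc1 <|
        (Finset.single_le_sum (f := fun j => (a j).ncard) (fun _ _ => Nat.zero_le _)
          (Finset.mem_range.2 hi)).trans
          (Nat.le_add_left _ _)

end Icp

def slalomSeparator (c : ℕ → ℕ) (a A : ℕ → Set ℕ) (Φ : ℕ → Finset (Set ℕ)) (g : ℕ → ℕ) :
    Set ℕ :=
  {y | ∃ i, ∃ u ∈ Φ i, ∃ n, y ∈ A n ∩ u ∩ a i ∧ (A n ∩ u ∩ a i).ncard < c i ^ g n}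

section Separator

variable {c : ℕ → ℕ} {a A : ℕ → Set ℕ} {Φ : ℕ → Finset (Set ℕ)} {g : ℕ → ℕ}

theorem inter_slalomSeparator_mem_Icp (hc2 : ∀ i, 2 ≤ c i) (hfin : ∀ i, (a i).Finite)
    (ha : ∀ i j, i ≠ j → Disjoint (a i) (a j)) (hA : ∀ i j, i ≠ j → Disjoint (A i) (A j))
    (hΦ : ∀ᶠ i in atTop, (Φ i).card ≤ c i) (n : ℕ) :
    A n ∩ slalomSeparator c a A Φ g ∈ Icp c a := by
  classical
  refine mem_Icp_of_eventually_le hc2 hfin (K := g n + 1) ?_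
  filter_upwards [hΦ] with i hi
  set small := (Φ i).filter fun u => (A n ∩ u ∩ a i).ncard < c i ^ g n
  have hsub : A n ∩ slalomSeparator c a A Φ g ∩ a i ⊆ ⋃ u ∈ small, A n ∩ u ∩ a i := by
    rintro y ⟨⟨hyA, j, u, hu, m, ⟨⟨hyA', hyu⟩, hyj⟩, hsmall⟩, hya⟩
    obtain rfl : j = i := by_contra fun hji => disjoint_left.1 (ha j i hji) hyj hya
    obtain rfl : m = n := by_contra fun hmn => disjoint_left.1 (hA m n hmn) hyA' hyA
    exact mem_iUnion₂.2 ⟨u, Finset.mem_filter.2 ⟨hu, hsmall⟩, ⟨hyA, hyu⟩, hya⟩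
  calc (A n ∩ slalomSeparator c a A Φ g ∩ a i).ncard
      ≤ (⋃ u ∈ small, A n ∩ u ∩ a i).ncard :=
        ncard_le_ncard hsub ((hfin i).subset (iUnion₂_subset fun _ _ => inter_subset_right))
    _ ≤ ∑ u ∈ small, (A n ∩ u ∩ a i).ncard := Finset.set_ncard_biUnion_le _ _
    _ ≤ ∑ _u ∈ small, c i ^ g n := Finset.sum_le_sum fun u hu => (Finset.mem_filter.1 hu).2.le
    _ ≤ c i * c i ^ g n := by
        rw [Finset.sum_const, smul_eq_mul]
        exact Nat.mul_le_mul_right _ ((Finset.card_filter_le _ _).trans hi)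
    _ = c i ^ (g n + 1) := (pow_succ' _ _).symm

theorem diff_slalomSeparator_mem_Icp (hc2 : ∀ i, 2 ≤ c i) (hfin : ∀ i, (a i).Finite)
    (hAcov : (⋃ n, A n) = Set.univ) {s : Set ℕ} (hAs : ∀ n, A n ∩ s ∈ Icp c a)
    (hg : ∀ᶠ n in atTop, ∀ i, (A n ∩ s ∩ a i).ncard < c i ^ g n)
    (hΦ : ∀ᶠ i in atTop, s ∩ a i ∈ Φ i) :
    s \ slalomSeparator c a A Φ g ∈ Icp c a := by
  obtain ⟨N, hN⟩ := eventually_atTop.1 hg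
  -- the pieces `A n ∩ s ∩ a i` with `N ≤ n` lie in the separator, so only `n < N` remain
  obtain ⟨K, hK⟩ : (⋃ n ∈ Finset.range N, A n ∩ s) ∈ Icp c a :=
    (isIdealOn_Icp hc2 hfin).biUnion_mem _ fun n _ => hAs n
  refine mem_Icp_of_eventually_le hc2 hfin (K := K) ?_
  filter_upwards [hΦ] with i hi
  refine (ncard_le_ncard ?_ ((hfin i).inter_of_right _)).trans (hK i).le
  rintro y ⟨⟨hys, hyC⟩, hya⟩
  obtain ⟨n, hyA⟩ := mem_iUnion.1 (hAcov ▸ mem_univ y)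
  refine ⟨mem_iUnion₂.2 ⟨n, Finset.mem_range.2 (not_le.1 fun hn => hyC ?_), hyA, hys⟩, hya⟩
  have hpiece : A n ∩ (s ∩ a i) ∩ a i = A n ∩ s ∩ a i := by simp [inter_assoc]
  exact ⟨i, s ∩ a i, hi, n, hpiece ▸ ⟨⟨hyA, hys⟩, hya⟩, hpiece ▸ hN n hn i⟩

end Separator

theorem Icp_partitionPairsSeparated {b h c : ℕ → ℕ} {a : ℕ → Set ℕ} (hb2 : ∀ i, 2 ≤ b i)
    (hc2 : ∀ i, 2 ≤ c i) (hhc : ∀ᶠ i in atTop, h i ≤ c i) (hpart : IsPartitionFin a)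
    (hsize : ∀ᶠ i in atTop, (a i).ncard ≤ Nat.log 2 (b i)) :
    PartitionPairsSeparated (Icp c a) (min (bLoc b h) unboundingNumber) := by
  obtain ⟨-, hfin, ha, -⟩ := hpart
  intro A hA hAcov B hB hAB
  choose f hf using fun (s : B) n => hAB n s s.2
  obtain ⟨g, hg⟩ :=
    exists_eventually_le_of_mk_lt_unboundingNumber f (hB.trans_le (min_le_right _ _))
  have hcode : ∀ᶠ i in atTop, 2 ^ (a i).ncard ≤ b i := hsize.mono fun i hi =>
    (Nat.pow_le_pow_right two_pos hi).trans (Nat.pow_log_le_self 2 (by have := hb2 i; omega))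
  obtain ⟨Φ, hΦh, hΦ⟩ := exists_powerset_slalom_of_mk_lt_bLoc (hB.trans_le (min_le_left _ _))
    (fun i => (hb2 i).trans_lt' two_pos) hfin hcode (fun (s : B) i => s ∩ a i)
    (fun _ _ => inter_subset_right)
  refine ⟨slalomSeparator c a A Φ g, fun n => ?_, fun s hs => ?_⟩
  · exact inter_slalomSeparator_mem_Icp hc2 hfin ha hA (hhc.mono fun i hi => (hΦh i).trans hi) n
  · refine diff_slalomSeparator_mem_Icp hc2 hfin hAcov (fun n => hAB n s hs) ?_ (hΦ ⟨s, hs⟩)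
    filter_upwards [hg ⟨s, hs⟩] with n hn i
    exact (hf ⟨s, hs⟩ n i).trans_le (Nat.pow_le_pow_right ((hc2 i).trans' one_le_two) hn)

theorem min_bLoc_b_le_rothberger_Icp_general
    (b h c : ℕ → ℕ) (a : ℕ → Set ℕ)
    (hb2 : ∀ i, 2 ≤ b i)
    (hc2 : ∀ i, 2 ≤ c i)
    (hhc : ∀ᶠ i in atTop, h i ≤ c i)
    (hpart : IsPartitionFin a)
    (hsize : ∀ᶠ i in atTop, (a i).ncard ≤ Nat.log 2 (b i)) :
    (∀ lam : Cardinal, HasOmegaGap (Icp c a) lam →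
      min (bLoc b h) unboundingNumber ≤ lam) ∧
    (∀ A : ℕ → Set ℕ, (∀ i j, i ≠ j → Disjoint (A i) (A j)) → (⋃ i, A i) = Set.univ →
      ∀ B : Set (Set ℕ), #B < min (bLoc b h) unboundingNumber →
        (∀ i : ℕ, ∀ s ∈ B, A i ∩ s ∈ Icp c a) →
        ∃ C : Set ℕ, (∀ i : ℕ, A i ∩ C ∈ Icp c a) ∧ ∀ s ∈ B, s \ C ∈ Icp c a) := by
  have hsep := Icp_partitionPairsSeparated hb2 hc2 hhc hpart hsize
  exact ⟨fun _ => (isIdealOn_Icp hc2 hpart.2.1).le_of_hasOmegaGap hsep, hsep⟩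

/-- `min{𝔟_Loc(b,h), 𝔟} ≤ 𝔟(I_c(P))`: there is no `I_c(P)`-(ω,λ)-gap with
`λ < min{𝔟_Loc(b,h), 𝔟}`; equivalently, every `I_c(P)`-orthogonal pair `⟨A, B⟩` with `A`
a countable partition of `ω` and `|B| < min{𝔟_Loc(b,h), 𝔟}` is separated. -/
theorem min_bLoc_b_le_rothberger_Icp
    (b h c : ℕ → ℕ) (a : ℕ → Set ℕ)
    (hb2 : ∀ i, 2 ≤ b i) (hbtop : Tendsto b atTop atTop)
    (hhmono : Monotone h) (hhtop : Tendsto h atTop atTop)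
    (hc2 : ∀ i, 2 ≤ c i) (hctop : Tendsto c atTop atTop)
    (hhc : ∀ᶠ i in atTop, h i ≤ c i)
    (hpart : IsPartitionFin a)
    (hsize : ∀ᶠ i in atTop, (a i).ncard ≤ Nat.log 2 (b i)) :
    (∀ lam : Cardinal, HasOmegaGap (Icp c a) lam →
      min (bLoc b h) unboundingNumber ≤ lam) ∧
    (∀ A : ℕ → Set ℕ, (∀ i j, i ≠ j → Disjoint (A i) (A j)) → (⋃ i, A i) = Set.univ →
      ∀ B : Set (Set ℕ), #B < min (bLoc b h) unboundingNumber →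
        (∀ i : ℕ, ∀ s ∈ B, A i ∩ s ∈ Icp c a) →
        ∃ C : Set ℕ, (∀ i : ℕ, A i ∩ C ∈ Icp c a) ∧ ∀ s ∈ B, s \ C ∈ Icp c a) :=
  min_bLoc_b_le_rothberger_Icp_general b h c a hb2 hc2 hhc hpart hsize
end

section
/- Let I = I⟨a_i,φ_i⟩ be a tall fragmented ideal, L̄ = {L_n : n < ω} a partition of ω into infinite sets, and ρ ∈ ω^ω with ρ > 0. If lim_{i→∞} φ_i(a_i)/ρ(i) = +∞, then 𝔟(I) ≤ 𝔟^ρ(I,L̄): for every Ψ ⊆ S(2^ā,ρ) such that every Y ∈ O(I,L̄) satisfies ψ ∍' Y for some ψ ∈ Ψ, there exists an I-(ω,λ)-gap with λ ≤ |Ψ|. -/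
open Set Filter Cardinal

/-
Fix a level function `ℓ` with `i ∈ L (ℓ i)`. For each slalom `ψ` pick, in every large fragment
`a i`, a set `b ⊆ a i` of submeasure about `ℓ i + 1` that misses every member of `ψ i` of
submeasure at most `δ i = φ i (a i) / (2 ρ i)`: the at most `ρ i` such members cover only half of
the mass of `a i`, and tallness bounds the submeasures of singletons, so a greedy choice in the
rest overshoots `ℓ i + 1` by a bounded amount. With `B ψ = ⋃ i, b i`, the sets
`A n = ⋃ i ∈ L n, a i` and `B ψ`, `ψ ∈ Ψ`, form a gap: `B ψ` is bounded on each level, and a set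
`C` separating the pair lies in `O(I, L̄)`, so it is captured by some `ψ ∈ Ψ`; on a level `n` above
the bound of `B ψ \ C`, the fragments where `C ∩ a i ∈ ψ i` and `δ i` exceeds the bound of
`C ∩ A n` force `b i ⊆ B ψ \ C`, which is too large.
-/

noncomputable def IsPartitionFin.indexedPartition {a : ℕ → Set ℕ} (h : IsPartitionFin a) :
    IndexedPartition a :=
  .mk' a (fun _ _ hij => h.2.2.1 _ _ hij) h.1 fun p => mem_iUnion.1 (h.2.2.2 ▸ mem_univ p)

theorem IndexedPartition.mem_biUnion_iff {ι α : Type*} {s : ι → Set α} (P : IndexedPartition s)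
    {S : Set ι} {p : α} {j : ι} (hp : p ∈ s j) : p ∈ ⋃ i ∈ S, s i ↔ j ∈ S := by
  simp only [mem_iUnion, exists_prop]
  exact ⟨fun ⟨i, hi, hpi⟩ => P.eq_of_mem hpi hp ▸ hi, fun hj => ⟨j, hj, hp⟩⟩

theorem IsTall.bddAbove_range {I : Set (Set ℕ)} (htall : IsTall I) {g : ℕ → ℝ}
    (hg : ∀ Z ∈ I, BddAbove (g '' Z)) : BddAbove (range g) := by
  by_contra hunb
  have hfreq : ∀ n : ℕ, ∃ᶠ k in atTop, (n : ℝ) < g k := by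
    refine fun n => Nat.frequently_atTop_iff_infinite.2 fun hfin => hunb ?_
    refine ((bddAbove_Iic (a := (n : ℝ))).union (hfin.image g).bddAbove).mono ?_
    rintro _ ⟨k, rfl⟩
    by_cases hk : (n : ℝ) < g k
    · exact Or.inr ⟨k, hk, rfl⟩
    · exact Or.inl (not_lt.1 hk)
  obtain ⟨e, he_mono, he⟩ := extraction_forall_of_frequently hfreq
  obtain ⟨Z, hZe, hZinf, hZI⟩ :=
    htall (range e) (subset_univ _) (infinite_range_of_injective he_mono.injective)
  obtain ⟨K, hK⟩ := hg Z hZI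
  obtain ⟨n, hn, hKn⟩ := (hZinf.preimage hZe).exists_gt ⌈K⌉₊
  have hgK : g (e n) ≤ K := hK (mem_image_of_mem g hn)
  have hKn' : K < n := (Nat.le_ceil K).trans_lt (by exact_mod_cast hKn)
  linarith [he n]

namespace IsSubmeasureOn

variable {s : Set ℕ} {φ : Set ℕ → ℝ}

theorem sUnion_le (hφ : IsSubmeasureOn s φ) {W : Finset (Set ℕ)} (hW : ∀ x ∈ W, x ⊆ s) {d : ℝ}
    (hd : ∀ x ∈ W, φ x ≤ d) : φ (⋃₀ ↑W) ≤ W.card * d := by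
  classical
  induction W using Finset.induction with
  | empty => simp [hφ.1]
  | insert x W hx ih =>
    simp only [Finset.forall_mem_insert] at hW hd
    rw [Finset.coe_insert, sUnion_insert, Finset.card_insert_of_notMem hx]
    calc φ (x ∪ ⋃₀ ↑W) ≤ φ x + φ (⋃₀ ↑W) := hφ.2.2.2 _ _ hW.1 (sUnion_subset hW.2)
      _ ≤ d + W.card * d := add_le_add hd.1 (ih hW.2 hd.2)
      _ = ↑(W.card + 1) * d := by push_cast; ring

theorem exists_subset_apply_mem_Icc (hφ : IsSubmeasureOn s φ) {r : Set ℕ} (hr : r.Finite)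
    (hrs : r ⊆ s) {c K : ℝ} (hc : 0 < c) (hcr : c ≤ φ r) (hK : ∀ p ∈ r, φ {p} ≤ K) :
    ∃ b ⊆ r, φ b ∈ Icc c (c + K) := by
  induction r, hr using Set.Finite.induction_on with
  | empty => linarith [hφ.1]
  | @insert p r _ _ ih =>
    simp only [insert_subset_iff, forall_mem_insert] at hrs hK
    by_cases hcr' : c ≤ φ r
    · obtain ⟨b, hbr, hb⟩ := ih hrs.2 hcr' hK.2
      exact ⟨b, hbr.trans (subset_insert p r), hb⟩
    · refine ⟨insert p r, subset_rfl, hcr, ?_⟩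
      rw [insert_eq]
      calc φ ({p} ∪ r) ≤ φ {p} + φ r := hφ.2.2.2 _ _ (singleton_subset_iff.2 hrs.1) hrs.2
        _ ≤ c + K := by linarith [hK.1]

theorem exists_subset_apply_mem_Icc_disjoint (hφ : IsSubmeasureOn s φ) (hs : s.Finite)
    (ψ : Finset (Set ℕ)) {c δ K : ℝ} (hc : 0 < c) (hδ : 0 ≤ δ) (hK : ∀ p ∈ s, φ {p} ≤ K)
    (hbig : ψ.card * δ + c ≤ φ s) :
    ∃ b ⊆ s, φ b ∈ Icc c (c + K) ∧ ∀ x ∈ ψ, x ⊆ s → φ x ≤ δ → Disjoint b x := by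
  classical
  set W := ψ.filter fun x => x ⊆ s ∧ φ x ≤ δ
  have hWs : ⋃₀ (↑W : Set (Set ℕ)) ⊆ s := sUnion_subset fun x hx => (Finset.mem_filter.1 hx).2.1
  have hW : φ (⋃₀ ↑W) ≤ ψ.card * δ := calc
    φ (⋃₀ ↑W) ≤ W.card * δ := hφ.sUnion_le (fun x hx => (Finset.mem_filter.1 hx).2.1)
      fun x hx => (Finset.mem_filter.1 hx).2.2
    _ ≤ ψ.card * δ := by gcongr; exact Finset.filter_subset _ _
  have hrest : c ≤ φ (s \ ⋃₀ ↑W) := by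
    have := hφ.2.2.2 _ (s \ ⋃₀ ↑W) hWs sdiff_subset
    rw [union_sdiff_cancel hWs] at this
    linarith
  obtain ⟨b, hb, hbc⟩ := hφ.exists_subset_apply_mem_Icc hs.sdiff sdiff_subset hc hrest
    fun p hp => hK p hp.1
  refine ⟨b, hb.trans sdiff_subset, hbc, fun x hx hxs hxδ => ?_⟩
  exact (disjoint_sdiff_left.mono hb (subset_sUnion_of_mem (Finset.mem_filter.2 ⟨hx, hxs, hxδ⟩)))

end IsSubmeasureOn

theorem eventually_card_mul_add_le {u : ℕ → ℝ} {ρ m : ℕ → ℕ} (hρ : ∀ i, 0 < ρ i)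
    (hm : ∀ i, m i ≤ ρ i) (hu : Tendsto (fun i => u i / ρ i) atTop atTop) (c K : ℝ) :
    ∀ᶠ i in atTop, m i * (u i / (2 * ρ i)) + c ≤ u i ∧ K ≤ u i / (2 * ρ i) := by
  filter_upwards [hu.eventually_ge_atTop (max (max (2 * c) (2 * K)) 0)] with i hi
  have hρi : (1 : ℝ) ≤ ρ i := by exact_mod_cast hρ i
  have hmi : (m i : ℝ) ≤ ρ i := by exact_mod_cast hm i
  have hu0 : 0 ≤ u i / ρ i := (le_max_right _ _).trans hi
  have hu : u i / ρ i ≤ u i := div_le_self (by simpa using (le_div_iff₀ (by linarith)).1 hu0) hρi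
  have hhalf : u i / (2 * ρ i) = u i / ρ i / 2 := by rw [div_div, mul_comm]
  have hc : 2 * c ≤ u i / ρ i := (le_max_left _ _).trans ((le_max_left _ _).trans hi)
  have hK : 2 * K ≤ u i / ρ i := (le_max_right _ _).trans ((le_max_left _ _).trans hi)
  have hρu : (ρ i : ℝ) * (u i / (2 * ρ i)) = u i / 2 := by field_simp
  rw [hhalf] at hρu ⊢
  constructor
  · nlinarith [mul_le_mul_of_nonneg_right hmi (div_nonneg hu0 zero_le_two)]
  · linarith

namespace IsFragmentation

variable {I : Set (Set ℕ)} {a : ℕ → Set ℕ} {φ : ℕ → Set ℕ → ℝ}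

theorem inter_biUnion_mem_iff (hfrag : IsFragmentation I a φ) {X S : Set ℕ} :
    X ∩ ⋃ i ∈ S, a i ∈ I ↔ ∃ K, ∀ i ∈ S, φ i (X ∩ a i) ≤ K := by
  set P := hfrag.1.indexedPartition
  have hin : ∀ i ∈ S, (X ∩ ⋃ j ∈ S, a j) ∩ a i = X ∩ a i := fun i hi =>
    Subset.antisymm (fun p hp => ⟨hp.1.1, hp.2⟩)
      fun p hp => ⟨⟨hp.1, (P.mem_biUnion_iff hp.2).2 hi⟩, hp.2⟩
  have hout : ∀ i ∉ S, (X ∩ ⋃ j ∈ S, a j) ∩ a i = ∅ := fun i hi =>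
    eq_empty_of_forall_notMem fun p hp => hi ((P.mem_biUnion_iff hp.2).1 hp.1.2)
  rw [hfrag.2.2]
  constructor
  · rintro ⟨K, hK⟩
    exact ⟨K, fun i hi => hin i hi ▸ hK i⟩
  · rintro ⟨K, hK⟩
    refine ⟨max K 0, fun i => ?_⟩
    by_cases hi : i ∈ S
    · exact hin i hi ▸ (hK i hi).trans (le_max_left _ _)
    · rw [hout i hi, (hfrag.2.1 i).1]
      exact le_max_right _ _

theorem exists_singleton_le (hfrag : IsFragmentation I a φ) (htall : IsTall I) :
    ∃ K, ∀ i, ∀ p ∈ a i, φ i {p} ≤ K := by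
  set P := hfrag.1.indexedPartition
  obtain ⟨K, hK⟩ := htall.bddAbove_range (g := fun p => φ (P.index p) {p}) fun Z hZ => by
    obtain ⟨K, hK⟩ := (hfrag.2.2 Z).1 hZ
    refine ⟨K, ?_⟩
    rintro _ ⟨p, hp, rfl⟩
    exact ((hfrag.2.1 _).2.2.1 _ _ (singleton_subset_iff.2 (mem_inter hp (P.mem_index p)))
      inter_subset_right).trans (hK _)
  refine ⟨K, fun i p hp => ?_⟩
  obtain rfl := P.mem_iff_index_eq.1 hp
  exact hK (mem_range_self p)

theorem exists_avoiding_set (hfrag : IsFragmentation I a φ) {K : ℝ}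
    (hK : ∀ i, ∀ p ∈ a i, φ i {p} ≤ K) {c δ : ℕ → ℝ} (hc : ∀ i, 0 < c i) (hδ : ∀ i, 0 ≤ δ i)
    (ψ : ℕ → Finset (Set ℕ)) :
    ∃ B : Set ℕ, ∀ i, φ i (B ∩ a i) ≤ c i + K ∧ ((ψ i).card * δ i + c i ≤ φ i (a i) →
      c i ≤ φ i (B ∩ a i) ∧ ∀ x ∈ ψ i, x ⊆ a i → φ i x ≤ δ i → Disjoint (B ∩ a i) x) := by
  have hK0 : 0 ≤ K := by
    obtain ⟨p, hp⟩ := hfrag.1.1 0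
    exact ((hfrag.2.1 0).2.1 _ (singleton_subset_iff.2 hp)).trans (hK 0 p hp)
  have hb : ∀ i, ∃ b ⊆ a i, φ i b ≤ c i + K ∧ ((ψ i).card * δ i + c i ≤ φ i (a i) →
      c i ≤ φ i b ∧ ∀ x ∈ ψ i, x ⊆ a i → φ i x ≤ δ i → Disjoint b x) := by
    intro i
    by_cases hbig : (ψ i).card * δ i + c i ≤ φ i (a i)
    · obtain ⟨b, hba, ⟨hcb, hbc⟩, hdisj⟩ :=
        (hfrag.2.1 i).exists_subset_apply_mem_Icc_disjoint (hfrag.1.2.1 i) (ψ i) (hc i) (hδ i)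
          (hK i) hbig
      exact ⟨b, hba, hbc, fun _ => ⟨hcb, hdisj⟩⟩
    · refine ⟨∅, empty_subset _, ?_, fun h => absurd h hbig⟩
      rw [(hfrag.2.1 i).1]
      linarith [hc i]
  choose b hba hb using hb
  have hBa : ∀ i, (⋃ j, b j) ∩ a i = b i := by
    intro i
    ext p
    simp only [mem_inter_iff, mem_iUnion]
    constructor
    · rintro ⟨⟨j, hj⟩, hi⟩
      rwa [← hfrag.1.indexedPartition.eq_of_mem (hba j hj) hi]
    · exact fun hp => ⟨⟨i, hp⟩, hba i hp⟩
  exact ⟨⋃ j, b j, fun i => hBa i ▸ hb i⟩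

theorem isIGap (hfrag : IsFragmentation I a φ) {L : ℕ → Set ℕ}
    {Ψ : Set (ℕ → Finset (Set ℕ))}
    (hcov : ∀ Y : Set ℕ, (∀ n, Y ∩ ⋃ i ∈ L n, a i ∈ I) →
      ∃ ψ ∈ Ψ, ∀ n, {i | i ∈ L n ∧ Y ∩ a i ∈ ψ i}.Infinite)
    {B : (ℕ → Finset (Set ℕ)) → Set ℕ} (horth : ∀ ψ n, B ψ ∩ ⋃ i ∈ L n, a i ∈ I)
    (hlarge : ∀ ψ ∈ Ψ, ∀ (n : ℕ) (K : ℝ), ∀ᶠ i in atTop, i ∈ L n →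
      n + 1 ≤ φ i (B ψ ∩ a i) ∧ ∀ x ∈ ψ i, x ⊆ a i → φ i x ≤ K → Disjoint (B ψ ∩ a i) x) :
    IsIGap I (range fun n => ⋃ i ∈ L n, a i) (B '' Ψ) := by
  refine ⟨?_, fun C ⟨hCA, hCB⟩ => ?_⟩
  · rintro _ ⟨n, rfl⟩ _ ⟨ψ, -, rfl⟩
    rw [inter_comm]
    exact horth ψ n
  have hCA' : ∀ n, C ∩ ⋃ i ∈ L n, a i ∈ I := fun n => inter_comm C _ ▸ hCA _ ⟨n, rfl⟩
  obtain ⟨ψ, hψ, hinf⟩ := hcov C hCA'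
  obtain ⟨K₁, hK₁⟩ := (hfrag.2.2 _).1 (hCB _ ⟨ψ, hψ, rfl⟩)
  obtain ⟨n, hn⟩ := exists_nat_ge K₁
  obtain ⟨K₂, hK₂⟩ := hfrag.inter_biUnion_mem_iff.1 (hCA' n)
  obtain ⟨i, ⟨hiL, hiψ⟩, hi⟩ :=
    ((Nat.frequently_atTop_iff_infinite.2 (hinf n)).and_eventually (hlarge ψ hψ n K₂)).exists
  obtain ⟨hge, havoid⟩ := hi hiL
  have hdisj := havoid _ hiψ inter_subset_right (hK₂ i hiL)
  have hsub : B ψ ∩ a i ⊆ (B ψ \ C) ∩ a i := fun p hp =>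
    ⟨⟨hp.1, fun hpC => disjoint_left.1 hdisj hp ⟨hpC, hp.2⟩⟩, hp.2⟩
  linarith [(hfrag.2.1 i).2.2.1 _ _ hsub inter_subset_right, hK₁ i]

end IsFragmentation

/-- Let `I = I⟨a_i, φ_i⟩` be a tall fragmented ideal, `L̄ = {L_n}` a partition of `ω`
into infinite sets, and `ρ ∈ ω^ω` with `ρ > 0` such that `φ_i(a_i)/ρ(i) → ∞`.
Then `𝔟(I) ≤ 𝔟^ρ(I, L̄)`: for every family `Ψ ⊆ S(2^ā, ρ)` of slaloms such that every
`Y ∈ O(I, L̄)` satisfies `ψ ∍' Y` for some `ψ ∈ Ψ`, there exists an `I`-(ω,λ)-gap with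
`λ ≤ |Ψ|`. -/
theorem rothberger_le_bParam
    (a : ℕ → Set ℕ) (φ : ℕ → Set ℕ → ℝ) (I : Set (Set ℕ))
    (hfrag : IsFragmentation I a φ) (htall : IsTall I)
    (L : ℕ → Set ℕ) (hLinf : ∀ n, (L n).Infinite)
    (hLdisj : ∀ n m, n ≠ m → Disjoint (L n) (L m)) (hLcov : (⋃ n, L n) = Set.univ)
    (ρ : ℕ → ℕ) (hρ : ∀ i, 0 < ρ i)
    (hlim : Tendsto (fun i => φ i (a i) / (ρ i : ℝ)) atTop atTop) :
    ∀ Ψ : Set (ℕ → Finset (Set ℕ)),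
      (∀ ψ ∈ Ψ, ∀ i : ℕ, (∀ x ∈ ψ i, x ⊆ a i) ∧ (ψ i).card ≤ ρ i) →
      (∀ Y : Set ℕ, (∀ n : ℕ, (Y ∩ ⋃ i ∈ L n, a i) ∈ I) →
        ∃ ψ ∈ Ψ, ∀ n : ℕ, {i | i ∈ L n ∧ Y ∩ a i ∈ ψ i}.Infinite) →
      ∃ lam : Cardinal, lam ≤ #Ψ ∧ HasOmegaGap I lam := by
  intro Ψ hΨ hcov
  let Q : IndexedPartition L := .mk' L (fun n m h => hLdisj n m h) (fun n => (hLinf n).nonempty)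
    fun i => mem_iUnion.1 (hLcov ▸ mem_univ i)
  obtain ⟨K, hK⟩ := hfrag.exists_singleton_le htall
  choose B hB using fun ψ => hfrag.exists_avoiding_set hK (c := fun i => Q.index i + 1)
    (δ := fun i => φ i (a i) / (2 * ρ i)) (fun i => by positivity)
    (fun i => div_nonneg ((hfrag.2.1 i).2.1 _ subset_rfl) (by positivity)) ψ
  have horth : ∀ ψ n, B ψ ∩ ⋃ i ∈ L n, a i ∈ I := fun ψ n =>
    hfrag.inter_biUnion_mem_iff.2 ⟨n + 1 + K, fun i hi => Q.mem_iff_index_eq.1 hi ▸ (hB ψ i).1⟩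
  have hlarge : ∀ ψ ∈ Ψ, ∀ (n : ℕ) (K' : ℝ), ∀ᶠ i in atTop, i ∈ L n →
      n + 1 ≤ φ i (B ψ ∩ a i) ∧ ∀ x ∈ ψ i, x ⊆ a i → φ i x ≤ K' → Disjoint (B ψ ∩ a i) x := by
    intro ψ hψ n K'
    filter_upwards [eventually_card_mul_add_le hρ (fun i => (hΨ ψ hψ i).2) hlim (n + 1) K']
      with i ⟨hbig, hδ⟩ hi
    obtain rfl := Q.mem_iff_index_eq.1 hi
    obtain ⟨hge, havoid⟩ := (hB ψ i).2 hbig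
    exact ⟨hge, fun x hx hxa hxK => havoid x hx hxa (hxK.trans hδ)⟩
  have hA_inj : Function.Injective fun n => ⋃ i ∈ L n, a i :=
    (hfrag.1.indexedPartition.disjoint.biUnion_injective hfrag.1.1).comp
      fun n m h => Q.eq_of_mem (Q.some_mem n) (h ▸ Q.some_mem n)
  exact ⟨#(B '' Ψ), mk_image_le, _, _, hfrag.isIGap hcov horth hlarge,
    by rw [mk_range_eq _ hA_inj, mk_nat], rfl⟩
end

section
/- Let I = I⟨a_i,φ_i⟩ be a tall fragmented ideal and ρ ∈ ω^ω with ρ > 0 such that lim_{i→∞} φ_i(a_i)/ρ(i) = +∞. Let L ⊆ ω be infinite, A := ⋃_{i∈L} a_i, n < ω, f ∈ ω^ω, and let {ψ_k}_{k<ω} be a sequence of slaloms where each ψ_k is defined on L, ψ_k(i) is a set of at most ρ(i) subsets x of a_i with φ_i(x) ≤ f(k). Then there exists Z ∈ I with Z ⊆ A such that: (i) φ_i(Z ∩ a_i) > n for all but finitely many i ∈ L; and (ii) for every k < ω, for all but finitely many i ∈ L, every x ∈ ψ_k(i) satisfies x ∩ Z = ∅. -/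
open Set Filter Cardinal

/-!
Tallness forces the singletons of almost every block to have `φ_i`-measure at most some
constant `C`; adding points one at a time then shows that every subset of `a_i` of measure
`> n` contains one of measure in `(n, n + C]`. Choose `r(i) → ∞` so slowly that
`φ_i(a_i) ≥ ρ(i) (f(0) + ⋯ + f(r(i)) + n + 1)`. The union `U_i` of the members of
`ψ_0(i), …, ψ_{r(i)}(i)` has measure at most `ρ(i) (f(0) + ⋯ + f(r(i)))`, so `a_i \ U_i` has
measure `> n` and contains a piece `z_i` of measure in `(n, n + C]`. Then `Z = ⋃_i z_i` is
in `I`, meets almost every block of `L` in measure `> n`, and misses `ψ_k(i)` once `r(i) ≥ k`.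
-/

namespace IsSubmeasureOn

variable {s : Set ℕ} {φ : Set ℕ → ℝ}

theorem biUnion_le_sum (hφ : IsSubmeasureOn s φ) {β : Type*} (B : Finset β) {g : β → Set ℕ}
    (hg : ∀ b ∈ B, g b ⊆ s) : φ (⋃ b ∈ B, g b) ≤ ∑ b ∈ B, φ (g b) := by
  classical
  induction B using Finset.induction_on with
  | empty => simp [hφ.1]
  | @insert b B hb ih =>
    rw [Finset.set_biUnion_insert, Finset.sum_insert hb]
    have hB : ∀ c ∈ B, g c ⊆ s := fun c hc => hg c (Finset.mem_insert_of_mem hc)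
    calc φ (g b ∪ ⋃ c ∈ B, g c) ≤ φ (g b) + φ (⋃ c ∈ B, g c) :=
          hφ.2.2.2 _ _ (hg b (Finset.mem_insert_self b B)) (Set.iUnion₂_subset hB)
      _ ≤ φ (g b) + ∑ c ∈ B, φ (g c) := by gcongr; exact ih hB

theorem biUnion_le_card_mul (hφ : IsSubmeasureOn s φ) {S : Finset (Set ℕ)} {c : ℝ}
    (hS : ∀ x ∈ S, x ⊆ s ∧ φ x ≤ c) : φ (⋃ x ∈ S, x) ≤ S.card * c :=
  calc φ (⋃ x ∈ S, x) ≤ ∑ x ∈ S, φ x := hφ.biUnion_le_sum S fun x hx => (hS x hx).1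
    _ ≤ ∑ _x ∈ S, c := Finset.sum_le_sum fun x hx => (hS x hx).2
    _ = S.card * c := by rw [Finset.sum_const, nsmul_eq_mul]

/-- Adding one point at a time raises `φ` by at most `C`, so the first stage exceeding `t`
lands in `(t, t + C]`. -/
theorem exists_subset_between (hφ : IsSubmeasureOn s φ) {C t : ℝ} (ht : 0 ≤ t)
    (hC : ∀ p ∈ s, φ {p} ≤ C) {x : Set ℕ} (hxs : x ⊆ s) (hx : x.Finite) (htx : t < φ x) :
    ∃ y ⊆ x, t < φ y ∧ φ y ≤ t + C := by
  induction x, hx using Set.Finite.induction_on with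
  | empty => exact absurd (hφ.1 ▸ htx) ht.not_gt
  | @insert p x _ _ ih =>
    have hxs' : x ⊆ s := (Set.subset_insert p x).trans hxs
    by_cases htx' : t < φ x
    · obtain ⟨y, hyx, hy⟩ := ih hxs' htx'
      exact ⟨y, hyx.trans (Set.subset_insert p x), hy⟩
    · refine ⟨insert p x, subset_rfl, htx, ?_⟩
      have hp : p ∈ s := hxs (Set.mem_insert p x)
      calc φ (insert p x) = φ ({p} ∪ x) := rfl
        _ ≤ φ {p} + φ x := hφ.2.2.2 _ _ (Set.singleton_subset_iff.mpr hp) hxs'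
        _ ≤ t + C := by linarith [hC p hp]

theorem exists_subset_diff_between (hφ : IsSubmeasureOn s φ) (hs : s.Finite) {C t : ℝ}
    (ht : 0 ≤ t) (hC : ∀ p ∈ s, φ {p} ≤ C) {U : Set ℕ} (hU : U ⊆ s) (hUs : φ U + t < φ s) :
    ∃ y ⊆ s \ U, t < φ y ∧ φ y ≤ t + C := by
  have hsplit : φ s ≤ φ (s \ U) + φ U := by
    simpa only [Set.sdiff_union_of_subset hU] using hφ.2.2.2 (s \ U) U Set.sdiff_subset hU
  exact hφ.exists_subset_between ht hC Set.sdiff_subset (hs.subset Set.sdiff_subset) (by linarith)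

theorem exists_disjoint_slaloms (hφ : IsSubmeasureOn s φ) (hs : s.Finite) {C : ℝ}
    (hC : ∀ p ∈ s, φ {p} ≤ C) (t : ℕ) {ρ r : ℕ} {f : ℕ → ℕ}
    {ψ : ℕ → Finset (Set ℕ)} (hψ : ∀ k, (ψ k).card ≤ ρ ∧ ∀ x ∈ ψ k, x ⊆ s ∧ φ x ≤ f k)
    (hbig : ∑ k ∈ Finset.range (r + 1), (f k : ℝ) + t + 1 ≤ φ s / ρ) :
    ∃ y ⊆ s, t < φ y ∧ φ y ≤ t + C ∧ ∀ k ≤ r, ∀ x ∈ ψ k, Disjoint x y := by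
  set U := ⋃ k ∈ Finset.range (r + 1), ⋃ x ∈ ψ k, x
  have hU : U ⊆ s := Set.iUnion₂_subset fun k _ => Set.iUnion₂_subset fun x hx => ((hψ k).2 x hx).1
  have hUle : φ U ≤ ρ * ∑ k ∈ Finset.range (r + 1), (f k : ℝ) := by
    calc φ U ≤ ∑ k ∈ Finset.range (r + 1), φ (⋃ x ∈ ψ k, x) :=
          hφ.biUnion_le_sum _ fun k _ => Set.iUnion₂_subset fun x hx => ((hψ k).2 x hx).1
      _ ≤ ∑ k ∈ Finset.range (r + 1), (ρ : ℝ) * f k := by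
          refine Finset.sum_le_sum fun k _ => (hφ.biUnion_le_card_mul (hψ k).2).trans ?_
          gcongr
          exact_mod_cast (hψ k).1
      _ = ρ * ∑ k ∈ Finset.range (r + 1), (f k : ℝ) := (Finset.mul_sum ..).symm
  -- `ρ = 0` would make the quotient `φ s / ρ` vanish
  have hρ : (1 : ℝ) ≤ ρ := by
    refine Nat.one_le_cast.mpr (Nat.pos_of_ne_zero fun h0 => ?_)
    rw [h0, Nat.cast_zero, div_zero] at hbig
    linarith [show (0 : ℝ) ≤ ∑ k ∈ Finset.range (r + 1), (f k : ℝ) by positivity]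
  have hs' : ρ * (∑ k ∈ Finset.range (r + 1), (f k : ℝ) + t + 1) ≤ φ s :=
    (le_div_iff₀' (by linarith)).mp hbig
  obtain ⟨y, hyU, hy⟩ := hφ.exists_subset_diff_between hs t.cast_nonneg hC hU (by nlinarith)
  refine ⟨y, hyU.trans Set.sdiff_subset, hy.1, hy.2, fun k hk x hx => ?_⟩
  refine Set.disjoint_left.mpr fun q hqx hqy => (hyU hqy).2 ?_
  exact Set.mem_biUnion (Finset.mem_range.mpr (Nat.lt_succ_of_le hk)) (Set.mem_biUnion hx hqx)

end IsSubmeasureOn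

theorem Filter.Tendsto.exists_tendsto_atTop_eventually_le {g : ℕ → ℝ} (hg : Tendsto g atTop atTop)
    (F : ℕ → ℝ) : ∃ r : ℕ → ℕ, Tendsto r atTop atTop ∧ ∀ᶠ i in atTop, F (r i) ≤ g i := by
  refine ⟨fun i => Nat.findGreatest (fun r => F r ≤ g i) i, ?_, ?_⟩
  · refine tendsto_atTop.mpr fun R => ?_
    filter_upwards [hg.eventually_ge_atTop (F R), eventually_ge_atTop R] with i hgi hRi
    exact Nat.le_findGreatest hRi hgi
  · filter_upwards [hg.eventually_ge_atTop (F 0)] with i hgi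
    exact Nat.findGreatest_spec (P := fun r => F r ≤ g i) (Nat.zero_le i) hgi

theorem Set.iUnion_inter_eq_of_pairwise_disjoint {α ι : Type*} {a y : ι → Set α}
    (ha : Pairwise fun i j => Disjoint (a i) (a j)) (hy : ∀ i, y i ⊆ a i) (i : ι) :
    (⋃ j, y j) ∩ a i = y i := by
  refine Set.Subset.antisymm ?_ fun q hq => ⟨Set.mem_iUnion.mpr ⟨i, hq⟩, hy i hq⟩
  rintro q ⟨hq, hqa⟩
  obtain ⟨j, hqj⟩ := Set.mem_iUnion.mp hq
  obtain rfl | hji := eq_or_ne j i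
  · exact hqj
  · exact absurd hqa (Set.disjoint_left.mp (ha hji) (hy j hqj))

/-- Otherwise points of ever larger singleton measure in distinct blocks form a set none of
whose infinite subsets lies in `I`. -/
theorem IsFragmentation.exists_eventually_singleton_le {I : Set (Set ℕ)} {a : ℕ → Set ℕ}
    {φ : ℕ → Set ℕ → ℝ} (hfrag : IsFragmentation I a φ) (htall : IsTall I) :
    ∃ C : ℕ, ∀ᶠ i in atTop, ∀ p ∈ a i, φ i {p} ≤ C := by
  obtain ⟨⟨-, -, hdisj, -⟩, hsub, hmem⟩ := hfrag
  by_contra! hbig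
  obtain ⟨j, hj, hjbig⟩ := extraction_forall_of_frequently fun k : ℕ => hbig k
  choose p hpa hpφ using hjbig
  have hp : Function.Injective p := fun k l hkl => by
    by_contra hkl'
    exact Set.disjoint_left.mp (hdisj _ _ (hj.injective.ne hkl')) (hpa k) (hkl ▸ hpa l)
  obtain ⟨Z, hZp, hZinf, hZI⟩ :=
    htall (Set.range p) (Set.subset_univ _) (Set.infinite_range_of_injective hp)
  obtain ⟨K, hK⟩ := (hmem Z).mp hZI
  have hpZ : (p ⁻¹' Z).Infinite :=
    Set.Infinite.of_image p (by rwa [Set.image_preimage_eq_of_subset hZp])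
  obtain ⟨k, hkZ, hkK⟩ := hpZ.exists_gt ⌈K⌉₊
  have hpk : φ (j k) {p k} ≤ φ (j k) (Z ∩ a (j k)) :=
    (hsub _).2.2.1 _ _ (Set.singleton_subset_iff.mpr ⟨hkZ, hpa k⟩) Set.inter_subset_right
  have hKk : K < k := (Nat.le_ceil K).trans_lt (by exact_mod_cast hkK)
  linarith [hpφ k, hK (j k)]

theorem IsFragmentation.exists_mem_forall_inter {I : Set (Set ℕ)} {a : ℕ → Set ℕ}
    {φ : ℕ → Set ℕ → ℝ} (hfrag : IsFragmentation I a φ) {G : Set ℕ} {K : ℝ}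
    {P : ℕ → Set ℕ → Prop} (h : ∀ i ∈ G, ∃ y ⊆ a i, φ i y ≤ K ∧ P i y) :
    ∃ Z ∈ I, Z ⊆ ⋃ i ∈ G, a i ∧ ∀ i ∈ G, P i (Z ∩ a i) := by
  obtain ⟨⟨-, -, hdisj, -⟩, hsub, hmem⟩ := hfrag
  choose! y hya hyK hyP using h
  have hZa : ∀ i, (⋃ j ∈ G, y j) ∩ a i = ⋃ (_ : i ∈ G), y i :=
    Set.iUnion_inter_eq_of_pairwise_disjoint hdisj fun i => Set.iUnion_subset (hya i)
  refine ⟨⋃ j ∈ G, y j, (hmem _).mpr ⟨max K 0, fun i => ?_⟩, Set.biUnion_mono subset_rfl hya,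
    fun i hi => ?_⟩
  · by_cases hi : i ∈ G
    · simpa only [hZa, hi, Set.iUnion_true] using (hyK i hi).trans (le_max_left K 0)
    · simp only [hZa, hi, Set.iUnion_false, (hsub i).1, le_max_right]
  · simpa only [hZa, hi, Set.iUnion_true] using hyP i hi

theorem diag_slalom_general
    (a : ℕ → Set ℕ) (φ : ℕ → Set ℕ → ℝ) (I : Set (Set ℕ))
    (hfrag : IsFragmentation I a φ) (htall : IsTall I)
    (ρ : ℕ → ℕ)
    (hlim : Tendsto (fun i => φ i (a i) / (ρ i : ℝ)) atTop atTop)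
    (L : Set ℕ)
    (n : ℕ) (f : ℕ → ℕ)
    (ψ : ℕ → ℕ → Finset (Set ℕ))
    (hψ : ∀ k : ℕ, ∀ i ∈ L, (ψ k i).card ≤ ρ i ∧
      ∀ x ∈ ψ k i, x ⊆ a i ∧ φ i x ≤ (f k : ℝ)) :
    ∃ Z ∈ I, Z ⊆ (⋃ i ∈ L, a i) ∧
      {i | i ∈ L ∧ φ i (Z ∩ a i) ≤ (n : ℝ)}.Finite ∧
      ∀ k : ℕ, {i | i ∈ L ∧ ∃ x ∈ ψ k i, (x ∩ Z).Nonempty}.Finite := by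
  obtain ⟨C, hC⟩ := hfrag.exists_eventually_singleton_le htall
  obtain ⟨r, hr, hFr⟩ := hlim.exists_tendsto_atTop_eventually_le fun r =>
    ∑ k ∈ Finset.range (r + 1), (f k : ℝ) + n + 1
  set G := {i | i ∈ L ∧ (∀ p ∈ a i, φ i {p} ≤ C) ∧
    ∑ k ∈ Finset.range (r i + 1), (f k : ℝ) + n + 1 ≤ φ i (a i) / ρ i}
  have hG : {i | i ∈ L ∧ i ∉ G}.Finite :=
    (Nat.cofinite_eq_atTop ▸ hC.and hFr : ∀ᶠ i in cofinite, _).subset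
      fun i ⟨hiL, hiG⟩ hi => hiG ⟨hiL, hi⟩
  have hblock : ∀ i ∈ G, ∃ y ⊆ a i, φ i y ≤ n + C ∧
      n < φ i y ∧ ∀ k ≤ r i, ∀ x ∈ ψ k i, Disjoint x y := fun i ⟨hiL, hiC, hiF⟩ =>
    have ⟨y, hya, hyn, hyC, hyψ⟩ := (hfrag.2.1 i).exists_disjoint_slaloms (hfrag.1.2.1 i) hiC n
      (fun k => hψ k i hiL) hiF
    ⟨y, hya, hyC, hyn, hyψ⟩
  obtain ⟨Z, hZI, hZG, hZ⟩ := hfrag.exists_mem_forall_inter hblock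
  refine ⟨Z, hZI, hZG.trans (Set.biUnion_subset_biUnion_left fun i hi => hi.1),
    hG.subset fun i ⟨hiL, hin⟩ => ⟨hiL, fun hi => (hZ i hi).1.not_ge hin⟩, fun k => ?_⟩
  have hrk : {i | ¬k ≤ r i}.Finite :=
    (Nat.cofinite_eq_atTop ▸ hr.eventually_ge_atTop k : ∀ᶠ i in cofinite, k ≤ r i)
  refine (hG.union hrk).subset fun i ⟨hiL, x, hx, q, hqx, hqZ⟩ => ?_
  by_contra! hiGk
  obtain ⟨hiG, hki⟩ : i ∈ G ∧ k ≤ r i := by simpa [hiL] using hiGk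
  exact Set.disjoint_left.mp ((hZ i hiG).2 k hki x hx) hqx ⟨hqZ, ((hψ k i hiL).2 x hx).1 hqx⟩

/-- Diagonalizing against countably many slaloms: let `I = I⟨a_i, φ_i⟩` be a tall
fragmented ideal and `ρ > 0` with `φ_i(a_i)/ρ(i) → ∞`. Let `L ⊆ ω` be infinite,
`A = ⋃_{i ∈ L} a_i`, `n < ω`, `f ∈ ω^ω`, and let `{ψ_k}` be slaloms on `L` such that
`ψ_k(i)` consists of at most `ρ(i)` subsets `x` of `a_i` with `φ_i(x) ≤ f(k)`. Then there
is `Z ∈ I` with `Z ⊆ A` such that (i) `φ_i(Z ∩ a_i) > n` for all but finitely many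
`i ∈ L`, and (ii) for every `k`, for all but finitely many `i ∈ L`, every `x ∈ ψ_k(i)`
is disjoint from `Z`. -/
theorem diag_slalom
    (a : ℕ → Set ℕ) (φ : ℕ → Set ℕ → ℝ) (I : Set (Set ℕ))
    (hfrag : IsFragmentation I a φ) (htall : IsTall I)
    (ρ : ℕ → ℕ) (hρ : ∀ i, 0 < ρ i)
    (hlim : Tendsto (fun i => φ i (a i) / (ρ i : ℝ)) atTop atTop)
    (L : Set ℕ) (hL : L.Infinite)
    (n : ℕ) (f : ℕ → ℕ)
    (ψ : ℕ → ℕ → Finset (Set ℕ))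
    (hψ : ∀ k : ℕ, ∀ i ∈ L, (ψ k i).card ≤ ρ i ∧
      ∀ x ∈ ψ k i, x ⊆ a i ∧ φ i x ≤ (f k : ℝ)) :
    ∃ Z ∈ I, Z ⊆ (⋃ i ∈ L, a i) ∧
      {i | i ∈ L ∧ φ i (Z ∩ a i) ≤ (n : ℝ)}.Finite ∧
      ∀ k : ℕ, {i | i ∈ L ∧ ∃ x ∈ ψ k i, (x ∩ Z).Nonempty}.Finite :=
  diag_slalom_general a φ I hfrag htall ρ hlim L n f ψ hψ
end

section
/- Let I = I⟨a_i,φ_i⟩ be a tall fragmented ideal, L̄ = {L_n : n < ω} a partition of ω into infinite sets, ρ ∈ ω^ω with ρ > 0, θ a regular uncountable cardinal, and ℰ ⊆ ω^ω a fixed family satisfying conditions (i)–(iii) below. Then for every <θ-ρ-strong covering family Ψ'' (with respect to I and L̄), 𝔟^{ρ^{id}}(I,L̄) ≤ |Ψ''|. -/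
open Set Filter Cardinal

/-- The family `S(2^ā, g)` of slaloms `ψ` where `ψ(i)` is a set of at most `g(i)`
subsets of `a_i`. -/
def SlalomFam (a : ℕ → Set ℕ) (g : ℕ → ℕ) : Set (ℕ → Finset (Set ℕ)) :=
  {ψ | ∀ i, (∀ x ∈ ψ i, x ⊆ a i) ∧ (ψ i).card ≤ g i}

/-- `ψ` belongs to `S̃(I, Lset, m, ρ)` (restricted to `Lset`): for some `e ∈ E`, on
`Lset` the slalom `ψ(i)` consists of at most `ρ(i)^{e(i)}` subsets of `a_i` of
submeasure at most `m`. -/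
def InSTilde (a : ℕ → Set ℕ) (φ : ℕ → Set ℕ → ℝ) (ρ : ℕ → ℕ) (E : Set (ℕ → ℕ))
    (Lset : Set ℕ) (m : ℕ) (ψ : ℕ → Finset (Set ℕ)) : Prop :=
  ∃ e ∈ E, ∀ i ∈ Lset, (∀ x ∈ ψ i, x ⊆ a i ∧ φ i x ≤ (m : ℝ)) ∧ (ψ i).card ≤ ρ i ^ e i

/-- The slalom `ψ_Y(i) = {Y ∩ a_i}`. A strong covering family meets it on every `L_n` at once,
since `{(ψ_Y, n) : n < ω}` is countable and `θ` is uncountable. -/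
def traceSlalom (a : ℕ → Set ℕ) (Y : Set ℕ) : ℕ → Finset (Set ℕ) := fun i => {Y ∩ a i}

lemma inter_biUnion_inter_of_mem {a : ℕ → Set ℕ} {Y Lset : Set ℕ} {i : ℕ} (hi : i ∈ Lset) :
    (Y ∩ ⋃ j ∈ Lset, a j) ∩ a i = Y ∩ a i := by
  ext t
  constructor
  · rintro ⟨⟨htY, -⟩, hta⟩
    exact ⟨htY, hta⟩
  · rintro ⟨htY, hta⟩
    exact ⟨⟨htY, mem_biUnion hi hta⟩, hta⟩

lemma IsFragmentation.exists_nat_bound_of_inter_mem {I : Set (Set ℕ)} {a : ℕ → Set ℕ}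
    {φ : ℕ → Set ℕ → ℝ} (hfrag : IsFragmentation I a φ) {Y Lset : Set ℕ}
    (hY : (Y ∩ ⋃ i ∈ Lset, a i) ∈ I) : ∃ m : ℕ, ∀ i ∈ Lset, φ i (Y ∩ a i) ≤ m := by
  obtain ⟨K, hK⟩ := (hfrag.2.2 _).1 hY
  refine ⟨⌈K⌉₊, fun i hi => ?_⟩
  calc φ i (Y ∩ a i) = φ i ((Y ∩ ⋃ j ∈ Lset, a j) ∩ a i) := by
        rw [inter_biUnion_inter_of_mem hi]
    _ ≤ K := hK i
    _ ≤ ⌈K⌉₊ := Nat.le_ceil K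

lemma inSTilde_traceSlalom {a : ℕ → Set ℕ} {φ : ℕ → Set ℕ → ℝ} {ρ : ℕ → ℕ}
    {E : Set (ℕ → ℕ)} {Lset Y : Set ℕ} {m : ℕ} (hρ : ∀ i, 0 < ρ i) (hE : E.Nonempty)
    (hY : ∀ i ∈ Lset, φ i (Y ∩ a i) ≤ m) : InSTilde a φ ρ E Lset m (traceSlalom a Y) := by
  obtain ⟨e, he⟩ := hE
  refine ⟨e, he, fun i hi => ⟨fun x hx => ?_, ?_⟩⟩
  · rw [traceSlalom, Finset.mem_singleton] at hx
    subst hx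
    exact ⟨inter_subset_right, hY i hi⟩
  · simpa [traceSlalom] using Nat.one_le_pow _ _ (hρ i)

theorem bParam_le_of_strong_covering_general
    (a : ℕ → Set ℕ) (φ : ℕ → Set ℕ → ℝ) (I : Set (Set ℕ))
    (hfrag : IsFragmentation I a φ)
    (L : ℕ → Set ℕ)
    (ρ : ℕ → ℕ) (hρ : ∀ i, 0 < ρ i)
    (θ : Cardinal) (hθunc : ℵ₀ < θ)
    (E : Set (ℕ → ℕ))
    (hE3 : ∀ C : Set (ℕ → ℕ), C ⊆ E → C.Countable →
      ∃ e ∈ E, ∀ c ∈ C, ∀ᶠ i in atTop, c i ≤ e i)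
    (Ψ'' : Set (ℕ → Finset (Set ℕ)))
    (hΨ''sub : Ψ'' ⊆ SlalomFam a (fun i => ρ i ^ i))
    (hΨ''cov : ∀ Ψ : Set ((ℕ → Finset (Set ℕ)) × ℕ), #Ψ < θ →
      (∀ p ∈ Ψ, ∃ m : ℕ, InSTilde a φ ρ E (L p.2) m p.1) →
      ∃ ψ'' ∈ Ψ'', ∀ p ∈ Ψ, {i | i ∈ L p.2 ∧ p.1 i ⊆ ψ'' i}.Infinite) :
    ∃ Ψ : Set (ℕ → Finset (Set ℕ)), Ψ ⊆ SlalomFam a (fun i => ρ i ^ i) ∧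
      (∀ Y : Set ℕ, (∀ n : ℕ, (Y ∩ ⋃ i ∈ L n, a i) ∈ I) →
        ∃ ψ ∈ Ψ, ∀ n : ℕ, {i | i ∈ L n ∧ Y ∩ a i ∈ ψ i}.Infinite) ∧
      #Ψ ≤ #Ψ'' := by
  obtain ⟨e, heE, -⟩ := hE3 ∅ (empty_subset _) countable_empty
  refine ⟨Ψ'', hΨ''sub, fun Y hY => ?_, le_rfl⟩
  have hsmall : #(range fun n => (traceSlalom a Y, n)) < θ :=
    (mk_range_le.trans_eq mk_nat).trans_lt hθunc
  have hSTilde : ∀ p ∈ range (fun n => (traceSlalom a Y, n)),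
      ∃ m, InSTilde a φ ρ E (L p.2) m p.1 := by
    rintro _ ⟨n, rfl⟩
    obtain ⟨m, hm⟩ := hfrag.exists_nat_bound_of_inter_mem (hY n)
    exact ⟨m, inSTilde_traceSlalom hρ ⟨e, heE⟩ hm⟩
  obtain ⟨ψ'', hψ'', hcov⟩ := hΨ''cov _ hsmall hSTilde
  refine ⟨ψ'', hψ'', fun n => (hcov _ ⟨n, rfl⟩).mono fun i hi => ⟨hi.1, ?_⟩⟩
  simpa [traceSlalom, Finset.singleton_subset_iff] using hi.2

/-- Let `I = I⟨a_i, φ_i⟩` be a tall fragmented ideal, `L̄ = {L_n}` a partition of `ω`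
into infinite sets, `ρ > 0`, `θ` a regular uncountable cardinal and `E ⊆ ω^ω` a family
satisfying the standing conditions (i)–(iii). Then for every `<θ`-`ρ`-strong covering
family `Ψ''` (with respect to `I` and `L̄`) we have `𝔟^{ρ^{id}}(I, L̄) ≤ |Ψ''|`:
there is a family `Ψ ⊆ S(2^ā, ρ^{id})` witnessing `𝔟^{ρ^{id}}(I, L̄)` of size `≤ |Ψ''|`. -/
theorem bParam_le_of_strong_covering
    (a : ℕ → Set ℕ) (φ : ℕ → Set ℕ → ℝ) (I : Set (Set ℕ))
    (hfrag : IsFragmentation I a φ) (htall : IsTall I)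
    (L : ℕ → Set ℕ) (hLinf : ∀ n, (L n).Infinite)
    (hLdisj : ∀ n m, n ≠ m → Disjoint (L n) (L m)) (hLcov : (⋃ n, L n) = Set.univ)
    (ρ : ℕ → ℕ) (hρ : ∀ i, 0 < ρ i)
    (θ : Cardinal) (hθreg : θ.IsRegular) (hθunc : ℵ₀ < θ)
    (E : Set (ℕ → ℕ))
    (hE1 : ∀ e ∈ E, Monotone e ∧ Tendsto e atTop atTop ∧ (∀ i, e i ≤ i) ∧
      Tendsto (fun i => i - e i) atTop atTop)
    (hE2 : ∀ e ∈ E, ∃ e' ∈ E, ∀ᶠ i in atTop, e i + 1 ≤ e' i)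
    (hE3 : ∀ C : Set (ℕ → ℕ), C ⊆ E → C.Countable →
      ∃ e ∈ E, ∀ c ∈ C, ∀ᶠ i in atTop, c i ≤ e i)
    (Ψ'' : Set (ℕ → Finset (Set ℕ)))
    (hΨ''sub : Ψ'' ⊆ SlalomFam a (fun i => ρ i ^ i))
    (hΨ''cov : ∀ Ψ : Set ((ℕ → Finset (Set ℕ)) × ℕ), #Ψ < θ →
      (∀ p ∈ Ψ, ∃ m : ℕ, InSTilde a φ ρ E (L p.2) m p.1) →
      ∃ ψ'' ∈ Ψ'', ∀ p ∈ Ψ, {i | i ∈ L p.2 ∧ p.1 i ⊆ ψ'' i}.Infinite) :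
    ∃ Ψ : Set (ℕ → Finset (Set ℕ)), Ψ ⊆ SlalomFam a (fun i => ρ i ^ i) ∧
      (∀ Y : Set ℕ, (∀ n : ℕ, (Y ∩ ⋃ i ∈ L n, a i) ∈ I) →
        ∃ ψ ∈ Ψ, ∀ n : ℕ, {i | i ∈ L n ∧ Y ∩ a i ∈ ψ i}.Infinite) ∧
      #Ψ ≤ #Ψ'' :=
  bParam_le_of_strong_covering_general a φ I hfrag L ρ hρ θ hθunc E hE3 Ψ'' hΨ''sub hΨ''cov
end

section
/- Define σ : ω×ω → ω by σ(n,0) = 1 and σ(n,m+1) = n^{σ(n,m)}; define ρ ∈ ω^ω by ρ(0) = 2 and ρ(i+1) = σ(ρ(i), i+3); for x ∈ ω^ω define x^[0] := x and x^[k+1](i) := 2^{ρ(i)²·x^[k](i)}, and let R^ρ := {x ∈ ω^ω : for every k < ω, x^[k](i) ≤ ρ(i+1) for all but finitely many i}. Then: (a) the identity function belongs to R^ρ; (b) if x ∈ R^ρ, then the functions i ↦ 2^{x(i)}, i ↦ x(i)^{i·ρ(i)^i}, i ↦ i·x(i), and i ↦ |[x(i)]^{≤ρ(i)^i}| (the number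 of subsets of {0,…,x(i)−1} of size at most ρ(i)^i) all belong to R^ρ; (c) if x ∈ R^ρ, then the function i ↦ max_{j≤i} x(j) belongs to R^ρ; (d) if x ∈ R^ρ, then for all but finitely many i, i·|[x(i−1)]^{≤i}|^i ≤ ρ(i). -/
open Set Filter Cardinal

/-- The elementary exponentiation `σ(n,0) = 1`, `σ(n,m+1) = n^{σ(n,m)}`. -/
def sigmaExp (n : ℕ) : ℕ → ℕ
  | 0 => 1
  | m + 1 => n ^ sigmaExp n m

/-- `ρ(0) = 2`, `ρ(i+1) = σ(ρ(i), i+3)`. -/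
def rhoFn : ℕ → ℕ
  | 0 => 2
  | i + 1 => sigmaExp (rhoFn i) (i + 3)

/-- `x^[0] = x`, `x^[k+1](i) = 2^{ρ(i)² · x^[k](i)}`. -/
def iterX (x : ℕ → ℕ) : ℕ → ℕ → ℕ
  | 0 => x
  | k + 1 => fun i => 2 ^ (rhoFn i ^ 2 * iterX x k i)

/-- `R^ρ = {x : ∀ k, x^[k](i) ≤ ρ(i+1) for all but finitely many i}`. -/
def Rrho : Set (ℕ → ℕ) :=
  {x | ∀ k : ℕ, ∀ᶠ i in atTop, iterX x k i ≤ rhoFn (i + 1)}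

/-- The number of subsets of `{0, …, n-1}` of cardinality at most `k`. -/
def countSubsets (n k : ℕ) : ℕ :=
  ((Finset.range n).powerset.filter fun s => s.card ≤ k).card


/-! Everything is measured against the towers `σ(ρ(i), ·)`. One step `v ↦ 2^(ρ(i)² v)` of the
iteration `x ↦ x^[1]` climbs at most two levels of the tower, while `ρ(i+1) = σ(ρ(i), i+3)` sits at
a level that grows with `i`; hence every function eventually bounded by a fixed level, `ρ` itself
in particular, lies in `R^ρ`. Moreover `R^ρ` is closed under eventual domination, under pointwise
`max` and under `x ↦ x^[c]`, and each function in the statement is dominated by `ρ`, by `x^[1]`, by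
`x^[2]`, or (for the running maximum) by `max ρ x`. -/

lemma sigmaExp_one (n : ℕ) : sigmaExp n 1 = n := by simp [sigmaExp]

section sigmaExp

variable {n : ℕ}

lemma sigmaExp_lt_sigmaExp_succ (hn : 2 ≤ n) (m : ℕ) : sigmaExp n m < sigmaExp n (m + 1) :=
  Nat.lt_pow_self hn

lemma sigmaExp_monotone (hn : 2 ≤ n) : Monotone (sigmaExp n) :=
  monotone_nat_of_le_succ fun m => (sigmaExp_lt_sigmaExp_succ hn m).le

lemma le_sigmaExp (hn : 2 ≤ n) {m : ℕ} (hm : 1 ≤ m) : n ≤ sigmaExp n m :=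
  (sigmaExp_one n).ge.trans (sigmaExp_monotone hn hm)

lemma lt_sigmaExp (hn : 2 ≤ n) (m : ℕ) : m < sigmaExp n m := by
  induction m with
  | zero => simp [sigmaExp]
  | succ m ih => exact Nat.lt_of_le_of_lt ih (sigmaExp_lt_sigmaExp_succ hn m)

lemma two_pow_sq_mul_le_sigmaExp (hn : 2 ≤ n) {j v : ℕ} (hv : v ≤ sigmaExp n (j + 2)) :
    2 ^ (n ^ 2 * v) ≤ sigmaExp n (j + 4) := by
  set s := sigmaExp n (j + 1)
  have hs : 2 ≤ s := hn.trans (le_sigmaExp hn (by omega))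
  have hs2 : s + 2 ≤ n ^ s := by
    nlinarith [Nat.mul_le_pow (show n ≠ 1 by omega) s]
  have hexp : n ^ 2 * v ≤ sigmaExp n (j + 3) := calc
    n ^ 2 * v ≤ n ^ 2 * n ^ s := Nat.mul_le_mul_left _ hv
    _ = n ^ (s + 2) := by ring
    _ ≤ n ^ n ^ s := Nat.pow_le_pow_right (by omega) hs2
  calc 2 ^ (n ^ 2 * v) ≤ n ^ (n ^ 2 * v) := Nat.pow_le_pow_left hn _
    _ ≤ n ^ sigmaExp n (j + 3) := Nat.pow_le_pow_right (by omega) hexp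

lemma iterate_two_pow_sq_mul_le_sigmaExp (hn : 2 ≤ n) {m v : ℕ} (hv : v ≤ sigmaExp n (m + 2))
    (k : ℕ) : (fun v => 2 ^ (n ^ 2 * v))^[k] v ≤ sigmaExp n (m + 2 * k + 2) := by
  induction k with
  | zero => exact hv
  | succ k ih =>
    rw [Function.iterate_succ_apply', show m + 2 * (k + 1) + 2 = m + 2 * k + 4 by ring]
    exact two_pow_sq_mul_le_sigmaExp hn ih

end sigmaExp

lemma add_two_le_rhoFn : ∀ i, i + 2 ≤ rhoFn i
  | 0 => le_rfl
  | i + 1 => (lt_sigmaExp (le_of_add_le_right (add_two_le_rhoFn i)) (i + 3)).le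

lemma two_le_rhoFn (i : ℕ) : 2 ≤ rhoFn i := le_of_add_le_right (add_two_le_rhoFn i)

lemma rhoFn_monotone : Monotone rhoFn :=
  monotone_nat_of_le_succ fun i => le_sigmaExp (two_le_rhoFn i) (by omega : 1 ≤ i + 3)

lemma iterX_eq_iterate (x : ℕ → ℕ) (k i : ℕ) :
    iterX x k i = (fun v => 2 ^ (rhoFn i ^ 2 * v))^[k] (x i) := by
  induction k with
  | zero => rfl
  | succ k ih => rw [Function.iterate_succ_apply', ← ih]; rfl

lemma iterX_one (x : ℕ → ℕ) (i : ℕ) : iterX x 1 i = 2 ^ (rhoFn i ^ 2 * x i) := rfl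

lemma iterX_two (x : ℕ → ℕ) (i : ℕ) :
    iterX x 2 i = 2 ^ (rhoFn i ^ 2 * 2 ^ (rhoFn i ^ 2 * x i)) := rfl

lemma monotone_iterate_two_pow_sq_mul (n k : ℕ) : Monotone (fun v => 2 ^ (n ^ 2 * v))^[k] :=
  Monotone.iterate (fun _ _ h => Nat.pow_le_pow_right two_pos (Nat.mul_le_mul_left _ h)) k

lemma iterX_le_iterX {x y : ℕ → ℕ} {i : ℕ} (h : x i ≤ y i) (k : ℕ) :
    iterX x k i ≤ iterX y k i := by
  simpa only [iterX_eq_iterate] using monotone_iterate_two_pow_sq_mul _ k h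

lemma iterX_max (x y : ℕ → ℕ) (k i : ℕ) :
    iterX (fun j => max (x j) (y j)) k i = max (iterX x k i) (iterX y k i) := by
  simpa only [iterX_eq_iterate] using (monotone_iterate_two_pow_sq_mul _ k).map_max

lemma iterX_iterX (x : ℕ → ℕ) (c k : ℕ) : iterX (iterX x c) k = iterX x (k + c) := by
  ext i
  simp only [iterX_eq_iterate, Function.iterate_add_apply]

lemma mem_Rrho_of_eventuallyLE {x y : ℕ → ℕ} (hx : x ∈ Rrho) (h : y ≤ᶠ[atTop] x) :
    y ∈ Rrho := fun k => by
  filter_upwards [hx k, h] with i hxk hyx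
  exact (iterX_le_iterX hyx k).trans hxk

lemma iterX_mem_Rrho {x : ℕ → ℕ} (hx : x ∈ Rrho) (c : ℕ) : iterX x c ∈ Rrho := fun k => by
  simpa only [iterX_iterX] using hx (k + c)

lemma max_mem_Rrho {x y : ℕ → ℕ} (hx : x ∈ Rrho) (hy : y ∈ Rrho) :
    (fun i => max (x i) (y i)) ∈ Rrho := fun k => by
  filter_upwards [hx k, hy k] with i hxk hyk
  rw [iterX_max]
  exact max_le hxk hyk

lemma mem_Rrho_of_eventually_le_sigmaExp {x : ℕ → ℕ} (m : ℕ)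
    (h : ∀ᶠ i in atTop, x i ≤ sigmaExp (rhoFn i) m) : x ∈ Rrho := fun k => by
  filter_upwards [h, eventually_ge_atTop (m + 2 * k)] with i hxi hi
  have hn := two_le_rhoFn i
  rw [iterX_eq_iterate]
  calc _ ≤ sigmaExp (rhoFn i) (m + 2 * k + 2) :=
        iterate_two_pow_sq_mul_le_sigmaExp hn (hxi.trans (sigmaExp_monotone hn (by omega))) k
    _ ≤ sigmaExp (rhoFn i) (i + 3) := sigmaExp_monotone hn (by omega)

lemma rhoFn_mem_Rrho : rhoFn ∈ Rrho :=
  mem_Rrho_of_eventually_le_sigmaExp 1 (.of_forall fun _ => (sigmaExp_one _).ge)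

lemma countSubsets_le_two_pow (n k : ℕ) : countSubsets n k ≤ 2 ^ n :=
  (Finset.card_filter_le _ _).trans_eq (by simp)

section bounds

variable (x : ℕ → ℕ) (i : ℕ)

lemma le_rhoFn_sq : i + 1 ≤ rhoFn i ^ 2 :=
  ((add_two_le_rhoFn i).trans' (by omega)).trans (Nat.le_self_pow two_ne_zero _)

lemma two_pow_le_iterX_one : 2 ^ x i ≤ iterX x 1 i := by
  have := two_le_rhoFn i
  exact iterX_one x i ▸ Nat.pow_le_pow_right two_pos (Nat.le_mul_of_pos_left _ (by positivity))

lemma mul_le_iterX_one : i * x i ≤ iterX x 1 i :=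
  calc i * x i ≤ rhoFn i ^ 2 * x i := Nat.mul_le_mul_right _ ((le_rhoFn_sq i).trans' (by omega))
    _ ≤ iterX x 1 i := iterX_one x i ▸ Nat.lt_two_pow_self.le

lemma pow_le_iterX_two : x i ^ (i * rhoFn i ^ i) ≤ iterX x 2 i := by
  set r := rhoFn i
  have hr : i < r := (add_two_le_rhoFn i).trans_lt' (by omega)
  have hexp : i * r ^ i ≤ 2 ^ r ^ 2 := calc
    i * r ^ i ≤ r ^ (i + 1) := by rw [pow_succ']; exact Nat.mul_le_mul_right _ hr.le
    _ ≤ (2 ^ r) ^ (i + 1) := Nat.pow_le_pow_left Nat.lt_two_pow_self.le _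
    _ ≤ (2 ^ r) ^ r := Nat.pow_le_pow_right (by positivity) hr
    _ = 2 ^ r ^ 2 := by rw [← pow_mul, sq]
  have hpos : 0 < r ^ 2 := by have := two_le_rhoFn i; positivity
  rw [iterX_two]
  calc x i ^ (i * r ^ i) ≤ (2 ^ x i) ^ (i * r ^ i) := Nat.pow_le_pow_left Nat.lt_two_pow_self.le _
    _ = 2 ^ (i * r ^ i * x i) := by rw [← pow_mul, mul_comm]
    _ ≤ 2 ^ (2 ^ r ^ 2 * x i) := Nat.pow_le_pow_right two_pos (Nat.mul_le_mul_right _ hexp)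
    _ ≤ 2 ^ (2 ^ r ^ 2) ^ x i :=
        Nat.pow_le_pow_right two_pos (Nat.mul_le_pow (Nat.one_lt_two_pow hpos.ne').ne' _)
    _ = 2 ^ 2 ^ (r ^ 2 * x i) := by rw [← pow_mul]
    _ ≤ 2 ^ (r ^ 2 * 2 ^ (r ^ 2 * x i)) :=
        Nat.pow_le_pow_right two_pos (Nat.le_mul_of_pos_left _ hpos)

lemma countSubsets_le_iterX_one (k : ℕ) : countSubsets (x i) k ≤ iterX x 1 i :=
  (countSubsets_le_two_pow _ _).trans (two_pow_le_iterX_one x i)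

lemma succ_mul_countSubsets_pow_le_iterX_two (k : ℕ) :
    (i + 1) * countSubsets (x i) k ^ (i + 1) ≤ iterX x 2 i := by
  have hx : x i + 1 ≤ iterX x 1 i := Nat.lt_two_pow_self.trans_le (two_pow_le_iterX_one x i)
  calc (i + 1) * countSubsets (x i) k ^ (i + 1) ≤ 2 ^ (i + 1) * (2 ^ x i) ^ (i + 1) :=
        Nat.mul_le_mul Nat.lt_two_pow_self.le (Nat.pow_le_pow_left (countSubsets_le_two_pow _ _) _)
    _ = 2 ^ ((x i + 1) * (i + 1)) := by ring
    _ ≤ 2 ^ (rhoFn i ^ 2 * iterX x 1 i) :=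
        Nat.pow_le_pow_right two_pos (by rw [mul_comm]; exact Nat.mul_le_mul (le_rhoFn_sq i) hx)

end bounds

lemma range_sup_eventuallyLE_max_rhoFn {x : ℕ → ℕ} (hx : ∀ᶠ i in atTop, x i ≤ rhoFn (i + 1)) :
    (fun i => (Finset.range (i + 1)).sup x) ≤ᶠ[atTop] fun i => max (rhoFn i) (x i) := by
  obtain ⟨N, hN⟩ := eventually_atTop.1 hx
  filter_upwards [eventually_ge_atTop (N + (Finset.range N).sup x)] with i hi
  refine Finset.sup_le fun j hj => ?_
  obtain hji | rfl := (Nat.lt_succ_iff.1 (Finset.mem_range.1 hj)).lt_or_eq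
  · refine le_max_of_le_left ?_
    obtain hjN | hjN := lt_or_ge j N
    · calc x j ≤ (Finset.range N).sup x := Finset.le_sup (Finset.mem_range.2 hjN)
        _ ≤ rhoFn i := (add_two_le_rhoFn i).trans' (by omega)
    · exact (hN j hjN).trans (rhoFn_monotone hji)
  · exact le_max_right _ _

lemma eventually_mul_countSubsets_pow_le_rhoFn {x : ℕ → ℕ} (hx : x ∈ Rrho) :
    ∀ᶠ i in atTop, i * countSubsets (x (i - 1)) i ^ i ≤ rhoFn i := by
  filter_upwards [(tendsto_sub_atTop_nat 1).eventually (hx 2), eventually_ge_atTop 1] with i hi hi1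
  obtain ⟨j, rfl⟩ := Nat.exists_eq_add_of_le' hi1
  simpa using (succ_mul_countSubsets_pow_le_iterX_two x j _).trans hi

/-- Closure properties of `R^ρ`:
(a) the identity belongs to `R^ρ`;
(b) if `x ∈ R^ρ` then `2^x`, `x^{id·ρ^{id}}`, `id·x` and `i ↦ |[x(i)]^{≤ρ(i)^i}|`
belong to `R^ρ`;
(c) if `x ∈ R^ρ` then `i ↦ max_{j ≤ i} x(j)` belongs to `R^ρ`;
(d) if `x ∈ R^ρ` then `i · |[x(i-1)]^{≤i}|^i ≤ ρ(i)` for all but finitely many `i`. -/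
theorem Rrho_closure_properties :
    ((fun i => i) ∈ Rrho) ∧
    (∀ x ∈ Rrho,
      ((fun i => 2 ^ x i) ∈ Rrho) ∧
      ((fun i => x i ^ (i * rhoFn i ^ i)) ∈ Rrho) ∧
      ((fun i => i * x i) ∈ Rrho) ∧
      ((fun i => countSubsets (x i) (rhoFn i ^ i)) ∈ Rrho)) ∧
    (∀ x ∈ Rrho, (fun i => (Finset.range (i + 1)).sup x) ∈ Rrho) ∧
    (∀ x ∈ Rrho, ∀ᶠ i in atTop, i * countSubsets (x (i - 1)) i ^ i ≤ rhoFn i) := by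
  refine ⟨?_, fun x hx => ⟨?_, ?_, ?_, ?_⟩, fun x hx => ?_, fun x hx => ?_⟩
  · exact mem_Rrho_of_eventuallyLE rhoFn_mem_Rrho
      (.of_forall fun i => (add_two_le_rhoFn i).trans' (Nat.le_add_right i 2))
  · exact mem_Rrho_of_eventuallyLE (iterX_mem_Rrho hx 1) (.of_forall (two_pow_le_iterX_one x))
  · exact mem_Rrho_of_eventuallyLE (iterX_mem_Rrho hx 2) (.of_forall (pow_le_iterX_two x))
  · exact mem_Rrho_of_eventuallyLE (iterX_mem_Rrho hx 1) (.of_forall (mul_le_iterX_one x))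
  · exact mem_Rrho_of_eventuallyLE (iterX_mem_Rrho hx 1)
      (.of_forall fun i => countSubsets_le_iterX_one x i _)
  · exact mem_Rrho_of_eventuallyLE (max_mem_Rrho rhoFn_mem_Rrho hx)
      (range_sup_eventuallyLE_max_rhoFn (hx 0))
  · exact eventually_mul_countSubsets_pow_le_rhoFn hx
end
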